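/- arXiv:2409.01346 — 6 statements merged into one kernel-verified Lean document; each statement's English description precedes it below -/
import Mathlib

section
/- Let d ≥ 2 and let A be an alphabet of size 2d equipped with an involution a ↦ a^{-1} without fixed points. Let ν = (ν_a)_{a∈A} be a vector of strictly positive reals and let M be the (2d)×(2d) matrix with entries M_{a,b} = ν_a · 1_{b ≠ a^{-1}}. Then the Perron–Frobenius (leading) eigenvalue ρ of M is the largest positive solution of the equation ∑_{a∈A} ν_a (ρ - ν_{a^{-1}})/(ρ^2 - ν_a ν_{a^{-1}}) = 1. -/
/-- The Perron–Frobenius eigenvalue `ρ` of the matrix `M_{a,b} = ν_a · 1_{b ≠ a⁻¹}`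
(characterized by having a strictly positive eigenvector) is the largest positive
solution of `∑_a ν_a (ρ - ν_{a⁻¹})/(ρ² - ν_a ν_{a⁻¹}) = 1`. -/
theorem stmt3 {A : Type*} [Fintype A] [DecidableEq A] (d : ℕ) (hd : 2 ≤ d)
    (hcard : Fintype.card A = 2 * d) (inv : A → A)
    (hinv : Function.Involutive inv) (hfp : ∀ a, inv a ≠ a)
    (ν : A → ℝ) (hν : ∀ a, 0 < ν a)
    (M : Matrix A A ℝ) (hM : ∀ a b, M a b = if b ≠ inv a then ν a else 0)
    (ρ : ℝ) (hρ : 0 < ρ)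
    (heig : ∃ u : A → ℝ, (∀ a, 0 < u a) ∧ M.mulVec u = ρ • u) :
    IsGreatest {r : ℝ | 0 < r ∧
      ∑ a, ν a * (r - ν (inv a)) / (r ^ 2 - ν a * ν (inv a)) = 1} ρ := by
  obtain ⟨u, hu, heq⟩ := heig
  set S : ℝ := ∑ a, u a with hSdef
  have hne : Nonempty A := Fintype.card_pos_iff.mp (by omega)
  have hS : 0 < S := Finset.sum_pos (fun a _ => hu a) Finset.univ_nonempty
  have hsplit : ∀ (c : A) (f : A → ℝ),
      ∑ b, (if b = c then 0 else f b) = (∑ b, f b) - f c := by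
    intro c f
    have h1 : (∑ b, if b = c then 0 else f b) + (∑ b, if b = c then f b else 0)
        = ∑ b, f b := by
      rw [← Finset.sum_add_distrib]
      apply Finset.sum_congr rfl
      intro b _
      split <;> simp
    have h2 : (∑ b, if b = c then f b else 0) = f c := by
      simp [Finset.sum_ite_eq']
    linarith
  -- eigen equation pointwise
  have key : ∀ a, ρ * u a = ν a * (S - u (inv a)) := by
    intro a
    have h1 := congrFun heq a
    simp only [Matrix.mulVec, dotProduct, Pi.smul_apply, smul_eq_mul] at h1
    have h2 : ∑ b, M a b * u b = ∑ b, (if b = inv a then 0 else ν a * u b) := by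
      apply Finset.sum_congr rfl
      intro b _
      rw [hM a b]
      by_cases hb : b = inv a <;> simp [hb]
    rw [h2, hsplit (inv a) (fun b => ν a * u b)] at h1
    rw [← h1, ← Finset.mul_sum, ← hSdef]
    ring
  -- ρ > ν a for all a
  have hρν : ∀ a, ν a < ρ := by
    intro a
    obtain ⟨c, hc⟩ : ∃ c : A, c ≠ a ∧ c ≠ inv a := by
      by_contra h
      push_neg at h
      have : (Finset.univ : Finset A) ⊆ {a, inv a} := by
        intro x _
        simp only [Finset.mem_insert, Finset.mem_singleton]
        rcases eq_or_ne x a with h' | h'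
        · exact Or.inl h'
        · exact Or.inr (h x h')
      have := Finset.card_le_card this
      have h2 : ({a, inv a} : Finset A).card ≤ 2 := Finset.card_insert_le _ _ |>.trans (by simp)
      simp [Finset.card_univ, hcard] at this
      omega
    have htriple : u a + u (inv a) + u c ≤ S := by
      have hsub : ({a, inv a, c} : Finset A) ⊆ Finset.univ := Finset.subset_univ _
      have := Finset.sum_le_sum_of_subset_of_nonneg hsub
        (fun b _ _ => (hu b).le)
      have hna : a ∉ ({inv a, c} : Finset A) := by
        simp only [Finset.mem_insert, Finset.mem_singleton]
        push_neg
        exact ⟨fun h => hfp a h.symm, fun h => hc.1 h.symm⟩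
      have hnb : inv a ∉ ({c} : Finset A) := by
        simp only [Finset.mem_singleton]
        exact fun h => hc.2 h.symm
      rw [Finset.sum_insert hna, Finset.sum_insert hnb, Finset.sum_singleton] at this
      linarith [this]
    have h1 := key a
    have h2 : u a < S - u (inv a) := by linarith [hu c]
    nlinarith [hu a, hν a]
  have hden : ∀ a, 0 < ρ ^ 2 - ν a * ν (inv a) := by
    intro a
    nlinarith [hρν a, hρν (inv a), hν a, hν (inv a)]
  -- solve for u a
  have key2 : ∀ a, (ρ ^ 2 - ν a * ν (inv a)) * u a = ν a * S * (ρ - ν (inv a)) := by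
    intro a
    have h1 := key a
    have h2 := key (inv a)
    rw [hinv a] at h2
    linear_combination ρ * h1 - ν a * h2
  have hmem : ρ ∈ {r : ℝ | 0 < r ∧
      ∑ a, ν a * (r - ν (inv a)) / (r ^ 2 - ν a * ν (inv a)) = 1} := by
    refine ⟨hρ, ?_⟩
    have : ∀ a : A, ν a * (ρ - ν (inv a)) / (ρ ^ 2 - ν a * ν (inv a)) = u a / S := by
      intro a
      rw [div_eq_div_iff (ne_of_gt (hden a)) (ne_of_gt hS)]
      linarith [key2 a]
    rw [Finset.sum_congr rfl (fun a _ => this a), ← Finset.sum_div, ← hSdef,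
      div_self (ne_of_gt hS)]
  refine ⟨hmem, ?_⟩
  rintro r ⟨hr, hsum⟩
  by_cases hdeg : ∃ a, r ^ 2 = ν a * ν (inv a)
  · obtain ⟨a, ha⟩ := hdeg
    nlinarith [hden a]
  · push_neg at hdeg
    set v : A → ℝ := fun a => ν a * (r - ν (inv a)) / (r ^ 2 - ν a * ν (inv a)) with hv
    have hvsum : ∑ a, v a = 1 := hsum
    have hveig : ∀ a, r * v a = ν a * (1 - v (inv a)) := by
      intro a
      have hda : r ^ 2 - ν a * ν (inv a) ≠ 0 := sub_ne_zero.mpr (hdeg a)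
      have hda' : r ^ 2 - ν (inv a) * ν a ≠ 0 := by
        rw [mul_comm]; exact hda
      simp only [hv, hinv a]
      field_simp
      ring
    -- maximizer of |v| / u
    obtain ⟨a0, _, ha0⟩ := Finset.exists_max_image Finset.univ
      (fun a => |v a| / u a) Finset.univ_nonempty
    obtain ⟨a1, _, ha1⟩ : ∃ a ∈ Finset.univ, v a ≠ 0 :=
      Finset.exists_ne_zero_of_sum_ne_zero (by rw [hvsum]; norm_num)
    have hvpos : 0 < |v a0| := by
      have h1 : 0 < |v a1| / u a1 := div_pos (abs_pos.mpr ha1) (hu a1)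
      have h2 := ha0 a1 (Finset.mem_univ a1)
      have h3 : 0 < |v a0| / u a0 := lt_of_lt_of_le h1 h2
      rcases div_pos_iff.mp h3 with ⟨h4, _⟩ | ⟨_, h5⟩
      · exact h4
      · exact absurd h5 (not_lt.mpr (hu a0).le)
    have hbound : ∀ b, |v b| * u a0 ≤ |v a0| * u b := by
      intro b
      have := ha0 b (Finset.mem_univ b)
      rw [div_le_div_iff₀ (hu b) (hu a0)] at this
      linarith
    -- main estimate
    have hrest : 1 - v (inv a0) = ∑ b ∈ Finset.univ.erase (inv a0), v b := by
      rw [Finset.sum_erase_eq_sub (Finset.mem_univ _), hvsum]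
    have hstep : r * |v a0| * u a0 ≤ ρ * |v a0| * u a0 := by
      have e1 : r * |v a0| = |r * v a0| := by
        rw [abs_mul, abs_of_pos hr]
      have e2 : |r * v a0| = ν a0 * |1 - v (inv a0)| := by
        rw [hveig a0, abs_mul, abs_of_pos (hν a0)]
      have e3 : |1 - v (inv a0)| ≤ ∑ b ∈ Finset.univ.erase (inv a0), |v b| := by
        rw [hrest]
        exact Finset.abs_sum_le_sum_abs _ _
      have e4 : (∑ b ∈ Finset.univ.erase (inv a0), |v b|) * u a0
          ≤ |v a0| * ∑ b ∈ Finset.univ.erase (inv a0), u b := by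
        rw [Finset.sum_mul, Finset.mul_sum]
        exact Finset.sum_le_sum (fun b _ => hbound b)
      have e5 : (∑ b ∈ Finset.univ.erase (inv a0), u b) = S - u (inv a0) := by
        rw [Finset.sum_erase_eq_sub (Finset.mem_univ _), ← hSdef]
      have e6 : ν a0 * (S - u (inv a0)) = ρ * u a0 := (key a0).symm
      calc r * |v a0| * u a0 = ν a0 * |1 - v (inv a0)| * u a0 := by rw [e1, e2]
        _ ≤ ν a0 * ((∑ b ∈ Finset.univ.erase (inv a0), |v b|) * u a0) := by
            rw [mul_assoc]
            exact mul_le_mul_of_nonneg_left (mul_le_mul_of_nonneg_right e3 (hu a0).le) (hν a0).le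
        _ ≤ ν a0 * (|v a0| * (S - u (inv a0))) := by
            rw [← e5]
            exact mul_le_mul_of_nonneg_left e4 (hν a0).le
        _ = ρ * |v a0| * u a0 := by rw [show ν a0 * (|v a0| * (S - u (inv a0)))
              = |v a0| * (ν a0 * (S - u (inv a0))) by ring, e6]; ring
    have : r * (|v a0| * u a0) ≤ ρ * (|v a0| * u a0) := by
      linarith [hstep]
    have hpos : 0 < |v a0| * u a0 := mul_pos hvpos (hu a0)
    exact le_of_mul_le_mul_right this hpos
end

section
/- In the setting of the previous matrix M with M_{a,b} = ν_a · 1_{b ≠ a^{-1}}, if additionally ν is symmetric, i.e., ν_a = ν_{a^{-1}} for all a ∈ A, then the Perron–Frobenius eigenvalue ρ of M is the largest positive solution of ∑_{a∈A} ν_a/(ρ + ν_a) = 1. -/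
/-- If in addition `ν` is symmetric (`ν_a = ν_{a⁻¹}`), then the Perron–Frobenius
eigenvalue `ρ` of `M_{a,b} = ν_a · 1_{b ≠ a⁻¹}` is the largest positive solution of
`∑_a ν_a/(ρ + ν_a) = 1`. -/
theorem stmt4 {A : Type*} [Fintype A] [DecidableEq A] (d : ℕ) (hd : 2 ≤ d)
    (hcard : Fintype.card A = 2 * d) (inv : A → A)
    (hinv : Function.Involutive inv) (hfp : ∀ a, inv a ≠ a)
    (ν : A → ℝ) (hν : ∀ a, 0 < ν a) (hsym : ∀ a, ν (inv a) = ν a)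
    (M : Matrix A A ℝ) (hM : ∀ a b, M a b = if b ≠ inv a then ν a else 0)
    (ρ : ℝ) (hρ : 0 < ρ)
    (heig : ∃ u : A → ℝ, (∀ a, 0 < u a) ∧ M.mulVec u = ρ • u) :
    IsGreatest {r : ℝ | 0 < r ∧ ∑ a, ν a / (r + ν a) = 1} ρ := by
  obtain ⟨u, hu, heq⟩ := heig
  have hne : Nonempty A := Fintype.card_pos_iff.mp (by omega)
  set S := ∑ a, u a with hS
  have hSpos : 0 < S := Finset.sum_pos (fun a _ => hu a) Finset.univ_nonempty
  have hρν : ∀ a : A, ρ + ν a ≠ 0 := fun a => by have := hν a; positivity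
  have key : ∀ a, ρ * u a = ν a * (S - u (inv a)) := by
    intro a
    have h1 := congrFun heq a
    have h2 : M.mulVec u a = ∑ b, (if b = inv a then 0 else ν a * u b) := by
      simp only [Matrix.mulVec, dotProduct]
      refine Finset.sum_congr rfl fun b _ => ?_
      rw [hM]
      by_cases hb : b = inv a <;> simp [hb]
    have h3 : ∑ b, (if b = inv a then 0 else ν a * u b)
        = (∑ b, ν a * u b) - ν a * u (inv a) := by
      have e : ∀ b, (if b = inv a then (0:ℝ) else ν a * u b)
          = ν a * u b - (if b = inv a then ν a * u b else 0) :=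
        fun b => by by_cases hb : b = inv a <;> simp [hb]
      simp only [e, Finset.sum_sub_distrib, Finset.sum_ite_eq', Finset.mem_univ, if_true]
    rw [h2, h3, ← Finset.mul_sum, ← hS, ← mul_sub] at h1
    simpa [Pi.smul_apply, smul_eq_mul] using h1.symm
  have key2 : ∀ a, u a + u (inv a) = 2 * S * (ν a / (ρ + ν a)) := by
    intro a
    have ha := key a
    have hb := key (inv a)
    rw [hinv a, hsym a] at hb
    have hcomb : (ρ + ν a) * (u a + u (inv a)) = 2 * S * ν a := by
      linear_combination ha + hb
    rw [← mul_div_assoc, eq_div_iff (hρν a)]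
    linear_combination hcomb
  have hsuminv : ∑ a, u (inv a) = S := Fintype.sum_bijective inv hinv.bijective _ _ (fun a => rfl)
  have hmain : ∑ a, ν a / (ρ + ν a) = 1 := by
    have h4 : ∑ a, (u a + u (inv a)) = 2 * S * ∑ a, ν a / (ρ + ν a) := by
      rw [Finset.sum_congr rfl fun a _ => key2 a, ← Finset.mul_sum]
    rw [Finset.sum_add_distrib, hsuminv, ← hS] at h4
    have : 2 * S * 1 = 2 * S * ∑ a, ν a / (ρ + ν a) := by linarith
    exact (mul_left_cancel₀ (by positivity) this).symm
  constructor
  · exact ⟨hρ, hmain⟩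
  · rintro r ⟨hr, hfr⟩
    by_contra h
    push_neg at h
    have : ∑ a, ν a / (r + ν a) < ∑ a, ν a / (ρ + ν a) := by
      refine Finset.sum_lt_sum_of_nonempty Finset.univ_nonempty fun a _ => ?_
      exact div_lt_div_of_pos_left (hν a) (by have := hν a; positivity) (by linarith)
    rw [hmain, hfr] at this
    exact lt_irrefl 1 this
end

section
/- Let ξ be an interior point of Ω with 0 < ||ξ||_1 < 1 and let h ∈ R^{2d} be orthogonal to the vector (ψ_a'(s(ξ)))_{a∈A}. Then for all t such that ξ + t h ∈ Ω, one has s(ξ + t h) = s(ξ) and Ψ*(ξ + t h) = Ψ*(ξ) + t ∑_a ψ_a(s(ξ)) h_a; i.e., Ψ* is affine along the segment Ω ∩ {ξ + t h : t ∈ R}. -/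
/-- `Ψ*(ξ) = inf_{s ≤ s₀} (∑_a ξ_a ψ_a(s) - s)`. -/
noncomputable def Psistar {A : Type*} [Fintype A] (s₀ : ℝ) (ψ : A → ℝ → ℝ)
    (ξ : A → ℝ) : ℝ :=
  sInf ((fun s => ∑ a, ξ a * ψ a s - s) '' Set.Iic s₀)

/-- Slope of the secant of `f` through `m` and `x`. -/
noncomputable def slp (f : ℝ → ℝ) (m x : ℝ) : ℝ := (f x - f m) / (x - m)

/-- Supremum of left slopes of `f` at `m`. -/
noncomputable def dLo (f : ℝ → ℝ) (m : ℝ) : ℝ := sSup (slp f m '' Set.Iio m)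

/-- Infimum of right slopes of `f` at `m` (within `Iic s₀`). -/
noncomputable def dHi (s₀ : ℝ) (f : ℝ → ℝ) (m : ℝ) : ℝ := sInf (slp f m '' Set.Ioc m s₀)

lemma slp_mono {s₀ : ℝ} {f : ℝ → ℝ} (hf : ConvexOn ℝ (Set.Iic s₀) f) {m : ℝ} (hm : m ≤ s₀)
    {x y : ℝ} (hx : x ≤ s₀) (hy : y ≤ s₀) (hxm : x ≠ m) (hym : y ≠ m) (hxy : x ≤ y) :
    slp f m x ≤ slp f m y :=
  hf.secant_mono hm hx hy hxm hym hxy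

lemma slpL_nonempty {f : ℝ → ℝ} {m : ℝ} : (slp f m '' Set.Iio m).Nonempty :=
  ⟨slp f m (m - 1), ⟨m - 1, Set.mem_Iio.2 (by linarith), rfl⟩⟩

lemma slpR_nonempty {s₀ : ℝ} {f : ℝ → ℝ} {m : ℝ} (hm : m < s₀) :
    (slp f m '' Set.Ioc m s₀).Nonempty :=
  ⟨slp f m ((m + s₀) / 2), ⟨(m + s₀) / 2, ⟨by linarith, by linarith⟩, rfl⟩⟩

lemma slpL_bddAbove {s₀ : ℝ} {f : ℝ → ℝ} (hf : ConvexOn ℝ (Set.Iic s₀) f) {m : ℝ}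
    (hm : m < s₀) : BddAbove (slp f m '' Set.Iio m) := by
  refine ⟨slp f m ((m + s₀) / 2), ?_⟩
  rintro x ⟨u, hu, rfl⟩
  have hu' : u < m := hu
  exact slp_mono hf hm.le (by linarith) (by linarith) (ne_of_lt hu')
    (ne_of_gt (show m < (m + s₀) / 2 by linarith)) (by linarith)

lemma slpR_bddBelow {s₀ : ℝ} {f : ℝ → ℝ} (hf : ConvexOn ℝ (Set.Iic s₀) f) {m : ℝ}
    (hm : m < s₀) : BddBelow (slp f m '' Set.Ioc m s₀) := by
  refine ⟨slp f m (m - 1), ?_⟩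
  rintro x ⟨w, hw, rfl⟩
  obtain ⟨hw1, hw2⟩ := hw
  exact slp_mono hf hm.le (by linarith) hw2 (by intro e; linarith [e ▸ hw1])
    (ne_of_gt hw1) (by linarith)

lemma slp_le_dLo {s₀ : ℝ} {f : ℝ → ℝ} (hf : ConvexOn ℝ (Set.Iic s₀) f) {m : ℝ}
    (hm : m < s₀) {u : ℝ} (hu : u < m) : slp f m u ≤ dLo f m :=
  le_csSup (slpL_bddAbove hf hm) ⟨u, hu, rfl⟩

lemma dHi_le_slp {s₀ : ℝ} {f : ℝ → ℝ} (hf : ConvexOn ℝ (Set.Iic s₀) f) {m : ℝ}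
    (hm : m < s₀) {w : ℝ} (hw1 : m < w) (hw2 : w ≤ s₀) : dHi s₀ f m ≤ slp f m w :=
  csInf_le (slpR_bddBelow hf hm) ⟨w, ⟨hw1, hw2⟩, rfl⟩

lemma dLo_le_dHi {s₀ : ℝ} {f : ℝ → ℝ} (hf : ConvexOn ℝ (Set.Iic s₀) f) {m : ℝ}
    (hm : m < s₀) : dLo f m ≤ dHi s₀ f m := by
  apply csSup_le slpL_nonempty
  rintro x ⟨u, hu, rfl⟩
  apply le_csInf (slpR_nonempty hm)
  rintro y ⟨w, hw, rfl⟩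
  have hu' : u < m := hu
  obtain ⟨hw1, hw2⟩ := hw
  exact slp_mono hf hm.le (by linarith) hw2 (ne_of_lt hu') (ne_of_gt hw1) (by linarith)

set_option maxHeartbeats 4000000 in
/-- Along directions `h` orthogonal to `(ψ_a'(s(ξ)))_a`, the minimizer is unchanged:
`s(ξ + t h) = s(ξ)`, and `Ψ*` is affine:
`Ψ*(ξ + t h) = Ψ*(ξ) + t ∑_a ψ_a(s(ξ)) h_a`. -/
theorem stmt9 {A : Type*} [Fintype A] (s₀ : ℝ) (ψ : A → ℝ → ℝ)
    (hconv : ∀ a, ConvexOn ℝ (Set.Iic s₀) (ψ a))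
    (s : (A → ℝ) → ℝ)
    (hs : ∀ η : A → ℝ, (∀ a, 0 ≤ η a) → 0 < ∑ a, η a → ∑ a, η a < 1 →
      s η < s₀ ∧ (∑ a, η a * deriv (ψ a) (s η)) = 1 ∧
      IsLeast ((fun t => ∑ a, η a * ψ a t - t) '' Set.Iic s₀)
        (∑ a, η a * ψ a (s η) - s η) ∧
      (∀ t ≤ s₀, (∑ a, η a * ψ a t - t) = Psistar s₀ ψ η → t = s η))
    (ξ : A → ℝ) (hξnn : ∀ a, 0 ≤ ξ a) (hξpos : 0 < ∑ a, ξ a) (hξlt : ∑ a, ξ a < 1)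
    (h : A → ℝ) (horth : ∑ a, deriv (ψ a) (s ξ) * h a = 0)
    (t : ℝ) (htnn : ∀ a, 0 ≤ ξ a + t * h a)
    (htpos : 0 < ∑ a, (ξ a + t * h a)) (htlt : ∑ a, (ξ a + t * h a) < 1) :
    s (ξ + t • h) = s ξ ∧
    Psistar s₀ ψ (ξ + t • h) = Psistar s₀ ψ ξ + t * ∑ a, ψ a (s ξ) * h a := by
  classical
  obtain ⟨hmlt, hstat, hleast, huniq⟩ := hs ξ hξnn hξpos hξlt
  set m := s ξ with hmdef
  have hmle : m ≤ s₀ := hmlt.le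
  -- slope abbreviations
  set dL : A → ℝ := fun a => dLo (ψ a) m with hdL
  set dR : A → ℝ := fun a => dHi s₀ (ψ a) m with hdR
  have hdLR : ∀ a, dL a ≤ dR a := fun a => dLo_le_dHi (hconv a) hmlt
  -- key identity: σ * (x - m) = ψ x - ψ m
  have hslp_mul : ∀ a : A, ∀ x : ℝ, x ≠ m → slp (ψ a) m x * (x - m) = ψ a x - ψ a m := by
    intro a x hx
    have : x - m ≠ 0 := sub_ne_zero.2 hx
    rw [slp, div_mul_cancel₀ _ this]
  -- generic minimality criterion
  have hminOf : ∀ ν : A → ℝ, (∀ a, 0 ≤ ν a) → (∑ a, ν a * dL a) ≤ 1 →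
      1 ≤ (∑ a, ν a * dR a) →
      ∀ u ≤ s₀, (∑ a, ν a * ψ a m - m) ≤ (∑ a, ν a * ψ a u - u) := by
    intro ν hν hL hR u hu
    have key : u - m ≤ ∑ a, ν a * (ψ a u - ψ a m) := by
      rcases lt_trichotomy u m with hum | rfl | hmu
      · have hσ : ∀ a, slp (ψ a) m u ≤ dL a := fun a => slp_le_dLo (hconv a) hmlt hum
        have hsum : ∑ a, ν a * slp (ψ a) m u ≤ 1 := by
          refine le_trans (Finset.sum_le_sum fun a _ =>
            mul_le_mul_of_nonneg_left (hσ a) (hν a)) hL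
        have e : ∑ a, ν a * (ψ a u - ψ a m) = (∑ a, ν a * slp (ψ a) m u) * (u - m) := by
          rw [Finset.sum_mul]
          refine Finset.sum_congr rfl fun a _ => ?_
          rw [mul_assoc, hslp_mul a u (ne_of_lt hum)]
        rw [e]
        nlinarith [hsum]
      · simp
      · have hσ : ∀ a, dR a ≤ slp (ψ a) m u := fun a => dHi_le_slp (hconv a) hmlt hmu hu
        have hsum : 1 ≤ ∑ a, ν a * slp (ψ a) m u := by
          refine le_trans hR (Finset.sum_le_sum fun a _ =>
            mul_le_mul_of_nonneg_left (hσ a) (hν a))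
        have e : ∑ a, ν a * (ψ a u - ψ a m) = (∑ a, ν a * slp (ψ a) m u) * (u - m) := by
          rw [Finset.sum_mul]
          refine Finset.sum_congr rfl fun a _ => ?_
          rw [mul_assoc, hslp_mul a u (ne_of_gt hmu)]
        rw [e]
        nlinarith [hsum]
    have e2 : ∑ a, ν a * ψ a u - ∑ a, ν a * ψ a m = ∑ a, ν a * (ψ a u - ψ a m) := by
      rw [← Finset.sum_sub_distrib]
      exact Finset.sum_congr rfl fun a _ => by ring
    linarith
  -- forcing lemma: admissible ν minimized at m has s ν = m, hence the stationarity eq at m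
  have hforce : ∀ ν : A → ℝ, (∀ a, 0 ≤ ν a) → 0 < ∑ a, ν a → ∑ a, ν a < 1 →
      (∑ a, ν a * dL a) ≤ 1 → 1 ≤ (∑ a, ν a * dR a) →
      s ν = m ∧ (∑ a, ν a * deriv (ψ a) m) = 1 := by
    intro ν h0 h1 h2 h3 h4
    obtain ⟨hb1, hb2, hb3, hb4⟩ := hs ν h0 h1 h2
    have hmin := hminOf ν h0 h3 h4
    have hPs' : Psistar s₀ ψ ν = ∑ a, ν a * ψ a (s ν) - s ν := hb3.csInf_eq
    have hle1 : (∑ a, ν a * ψ a (s ν) - s ν) ≤ ∑ a, ν a * ψ a m - m :=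
      hb3.2 ⟨m, hmle, rfl⟩
    have hle2 : (∑ a, ν a * ψ a m - m) ≤ ∑ a, ν a * ψ a (s ν) - s ν := hmin _ hb1.le
    have heq : (∑ a, ν a * ψ a m - m) = Psistar s₀ ψ ν := by rw [hPs']; linarith
    have hms : m = s ν := hb4 m hmle heq
    refine ⟨hms.symm, ?_⟩
    rw [hms]; exact hb2
  set S0 := ∑ a, ξ a with hS0
  have hSpos : 0 < S0 := hξpos
  set LamL := ∑ a, ξ a * dL a with hLamLdef
  set LamR := ∑ a, ξ a * dR a with hLamRdef
  -- nonempty index type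
  have hANE : Nonempty A := by
    rcases isEmpty_or_nonempty A with hA | hA
    · exfalso; rw [hS0] at hSpos; simp [Finset.univ_eq_empty] at hSpos
    · exact hA
  have hNE : (Finset.univ : Finset A).Nonempty := Finset.univ_nonempty
  -- LamL ≤ 1
  have hLamL : LamL ≤ 1 := by
    by_contra hcon
    push_neg at hcon
    set θ := (LamL - 1) / (S0 + 1) with hθ
    have hθpos : 0 < θ := div_pos (by linarith) (by linarith)
    have hch : ∀ a : A, ∃ u, u < m ∧ dL a - θ < slp (ψ a) m u := by
      intro a
      obtain ⟨x, ⟨u, hu, rfl⟩, hx⟩ :=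
        exists_lt_of_lt_csSup (slpL_nonempty (f := ψ a) (m := m))
          (show dL a - θ < dL a by linarith)
      exact ⟨u, hu, hx⟩
    choose u hu1 hu2 using hch
    set u' := Finset.univ.sup' hNE u with hu'
    have hu'm : u' < m := (Finset.sup'_lt_iff hNE).2 fun a _ => hu1 a
    have hu'ge : ∀ a, dL a - θ ≤ slp (ψ a) m u' := by
      intro a
      refine le_trans (hu2 a).le ?_
      exact slp_mono (hconv a) hmle (by have := hu1 a; linarith) (by linarith)
        (ne_of_lt (hu1 a)) (ne_of_lt hu'm) (Finset.le_sup' u (Finset.mem_univ a))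
    have hmin : (∑ a, ξ a * ψ a m - m) ≤ ∑ a, ξ a * ψ a u' - u' :=
      hleast.2 ⟨u', Set.mem_Iic.mpr (by linarith), rfl⟩
    have hs1 : ∑ a, ξ a * slp (ψ a) m u' ≤ 1 := by
      have e : ∑ a, ξ a * (ψ a u' - ψ a m) = (∑ a, ξ a * slp (ψ a) m u') * (u' - m) := by
        rw [Finset.sum_mul]
        refine Finset.sum_congr rfl fun a _ => ?_
        rw [mul_assoc, hslp_mul a u' (ne_of_lt hu'm)]
      have e2 : ∑ a, ξ a * ψ a u' - ∑ a, ξ a * ψ a m = ∑ a, ξ a * (ψ a u' - ψ a m) := by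
        rw [← Finset.sum_sub_distrib]
        exact Finset.sum_congr rfl fun a _ => by ring
      have hge : u' - m ≤ (∑ a, ξ a * slp (ψ a) m u') * (u' - m) := by
        rw [← e]; linarith
      nlinarith [hge, hu'm]
    have hs2 : LamL - θ * S0 ≤ ∑ a, ξ a * slp (ψ a) m u' := by
      have eθ : ∑ a, ξ a * θ = S0 * θ := by rw [hS0, Finset.sum_mul]
      have e : LamL - θ * S0 = ∑ a, (ξ a * dL a - ξ a * θ) := by
        rw [Finset.sum_sub_distrib, eθ, hLamLdef]; ring
      rw [e]
      refine Finset.sum_le_sum fun a _ => ?_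
      have := mul_le_mul_of_nonneg_left (hu'ge a) (hξnn a)
      nlinarith [this]
    have hfin : θ * (S0 + 1) = LamL - 1 := by
      rw [hθ]; exact div_mul_cancel₀ _ (by linarith : S0 + 1 ≠ 0)
    linarith [hs1, hs2, hfin, hθpos]
  -- 1 ≤ LamR
  have hLamR : 1 ≤ LamR := by
    by_contra hcon
    push_neg at hcon
    set θ := (1 - LamR) / (S0 + 1) with hθ
    have hθpos : 0 < θ := div_pos (by linarith) (by linarith)
    have hch : ∀ a : A, ∃ w, m < w ∧ w ≤ s₀ ∧ slp (ψ a) m w < dR a + θ := by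
      intro a
      obtain ⟨x, ⟨w, hw, rfl⟩, hx⟩ :=
        exists_lt_of_csInf_lt (slpR_nonempty (f := ψ a) hmlt)
          (show dR a < dR a + θ by linarith)
      exact ⟨w, hw.1, hw.2, hx⟩
    choose w hw1 hw2 hw3 using hch
    set w' := Finset.univ.inf' hNE w with hw'
    have hw'm : m < w' := (Finset.lt_inf'_iff hNE).2 fun a _ => hw1 a
    have hw's : w' ≤ s₀ := le_trans (Finset.inf'_le w (Finset.mem_univ hANE.some)) (hw2 _)
    have hw'le : ∀ a, slp (ψ a) m w' ≤ dR a + θ := by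
      intro a
      refine le_trans ?_ (hw3 a).le
      exact slp_mono (hconv a) hmle hw's (hw2 a) (ne_of_gt hw'm) (ne_of_gt (hw1 a))
        (Finset.inf'_le w (Finset.mem_univ a))
    have hmin : (∑ a, ξ a * ψ a m - m) ≤ ∑ a, ξ a * ψ a w' - w' :=
      hleast.2 ⟨w', hw's, rfl⟩
    have hs1 : 1 ≤ ∑ a, ξ a * slp (ψ a) m w' := by
      have e : ∑ a, ξ a * (ψ a w' - ψ a m) = (∑ a, ξ a * slp (ψ a) m w') * (w' - m) := by
        rw [Finset.sum_mul]
        refine Finset.sum_congr rfl fun a _ => ?_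
        rw [mul_assoc, hslp_mul a w' (ne_of_gt hw'm)]
      have e2 : ∑ a, ξ a * ψ a w' - ∑ a, ξ a * ψ a m = ∑ a, ξ a * (ψ a w' - ψ a m) := by
        rw [← Finset.sum_sub_distrib]
        exact Finset.sum_congr rfl fun a _ => by ring
      have hge : w' - m ≤ (∑ a, ξ a * slp (ψ a) m w') * (w' - m) := by
        rw [← e]; linarith
      nlinarith [hge, hw'm]
    have hs2 : ∑ a, ξ a * slp (ψ a) m w' ≤ LamR + θ * S0 := by
      have eθ : ∑ a, ξ a * θ = S0 * θ := by rw [hS0, Finset.sum_mul]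
      have e : LamR + θ * S0 = ∑ a, (ξ a * dR a + ξ a * θ) := by
        rw [Finset.sum_add_distrib, eθ, hLamRdef]; ring
      rw [e]
      refine Finset.sum_le_sum fun a _ => ?_
      have := mul_le_mul_of_nonneg_left (hw'le a) (hξnn a)
      nlinarith [this]
    have hfin : θ * (S0 + 1) = 1 - LamR := by
      rw [hθ]; exact div_mul_cancel₀ _ (by linarith : S0 + 1 ≠ 0)
    linarith [hs1, hs2, hfin, hθpos]
  -- LamL = 1
  have hLamLe : LamL = 1 := by
    by_contra hne
    have hlt : LamL < 1 := lt_of_le_of_ne hLamL hne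
    have hmxpos : (0:ℝ) < max LamL 1 := lt_of_lt_of_le one_pos (le_max_right _ _)
    set sP := min ((1 - S0) / (2 * S0)) ((1 - LamL) / (max LamL 1)) with hsP
    have hsPpos : 0 < sP :=
      lt_min (div_pos (by linarith) (by linarith)) (div_pos (by linarith) hmxpos)
    set ν := fun a => (1 + sP) * ξ a with hν
    have hν0 : ∀ a, 0 ≤ ν a := fun a => mul_nonneg (by linarith) (hξnn a)
    have hsumX : ∀ X : A → ℝ, ∑ a, ν a * X a = (1 + sP) * (∑ a, ξ a * X a) := by
      intro X
      rw [Finset.mul_sum]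
      exact Finset.sum_congr rfl fun a _ => by rw [hν]; ring
    have hνsum : ∑ a, ν a = (1 + sP) * S0 := by
      have := hsumX (fun _ => 1); simpa using this
    have hνpos : 0 < ∑ a, ν a := by rw [hνsum]; exact mul_pos (by linarith) hSpos
    have hνlt : ∑ a, ν a < 1 := by
      rw [hνsum]
      have h1 : sP ≤ (1 - S0) / (2 * S0) := min_le_left _ _
      have h2 : sP * S0 ≤ (1 - S0) / 2 := by
        have := mul_le_mul_of_nonneg_right h1 hSpos.le
        calc sP * S0 ≤ (1 - S0) / (2 * S0) * S0 := this
          _ = (1 - S0) / 2 := by field_simp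
      nlinarith
    have hL1 : ∑ a, ν a * dL a ≤ 1 := by
      rw [hsumX dL, ← hLamLdef]
      have hle : sP * LamL ≤ 1 - LamL := by
        rcases le_or_gt LamL 0 with h0 | h0
        · nlinarith
        · have h2 : sP ≤ (1 - LamL) / (max LamL 1) := min_le_right _ _
          have hmx : LamL ≤ max LamL 1 := le_max_left _ _
          have h3 : (1 - LamL) / (max LamL 1) * LamL ≤ 1 - LamL := by
            rw [div_mul_eq_mul_div, div_le_iff₀ hmxpos]
            nlinarith
          nlinarith [mul_le_mul_of_nonneg_right h2 h0.le]
      nlinarith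
    have hR1 : 1 ≤ ∑ a, ν a * dR a := by
      rw [hsumX dR, ← hLamRdef]
      nlinarith [hLamR, hsPpos]
    obtain ⟨_, hst⟩ := hforce ν hν0 hνpos hνlt hL1 hR1
    rw [hsumX (fun a => deriv (ψ a) m)] at hst
    rw [show (∑ a, ξ a * deriv (ψ a) m) = 1 from hstat] at hst
    nlinarith [hsPpos]
  -- LamR = 1
  have hLamRe : LamR = 1 := by
    by_contra hne
    have hlt : 1 < LamR := lt_of_le_of_ne hLamR (Ne.symm hne)
    have hLamRpos : 0 < LamR := by linarith
    set sP := min (1/2 : ℝ) ((LamR - 1) / LamR) with hsP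
    have hsPpos : 0 < sP := lt_min one_half_pos (div_pos (by linarith) hLamRpos)
    have hsPle : sP ≤ 1/2 := min_le_left _ _
    set ν := fun a => (1 - sP) * ξ a with hν
    have hν0 : ∀ a, 0 ≤ ν a := fun a => mul_nonneg (by linarith) (hξnn a)
    have hsumX : ∀ X : A → ℝ, ∑ a, ν a * X a = (1 - sP) * (∑ a, ξ a * X a) := by
      intro X
      rw [Finset.mul_sum]
      exact Finset.sum_congr rfl fun a _ => by rw [hν]; ring
    have hνsum : ∑ a, ν a = (1 - sP) * S0 := by
      have := hsumX (fun _ => 1); simpa using this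
    have hνpos : 0 < ∑ a, ν a := by
      rw [hνsum]; exact mul_pos (by linarith) hSpos
    have hνlt : ∑ a, ν a < 1 := by
      rw [hνsum]; nlinarith
    have hL1 : ∑ a, ν a * dL a ≤ 1 := by
      rw [hsumX dL, ← hLamLdef, hLamLe]; nlinarith
    have hR1 : 1 ≤ ∑ a, ν a * dR a := by
      rw [hsumX dR, ← hLamRdef]
      have h2 : sP ≤ (LamR - 1) / LamR := min_le_right _ _
      have h3 : sP * LamR ≤ LamR - 1 := by
        have := mul_le_mul_of_nonneg_right h2 hLamRpos.le
        calc sP * LamR ≤ (LamR - 1) / LamR * LamR := this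
          _ = LamR - 1 := by field_simp
      nlinarith
    obtain ⟨_, hst⟩ := hforce ν hν0 hνpos hνlt hL1 hR1
    rw [hsumX (fun a => deriv (ψ a) m)] at hst
    rw [show (∑ a, ξ a * deriv (ψ a) m) = 1 from hstat] at hst
    nlinarith [hsPpos]
  -- per-coordinate: dL b = deriv(ψ b)(m) = dR b
  have hkey : ∀ b : A, dL b = deriv (ψ b) m ∧ dR b = deriv (ψ b) m := by
    intro b
    set M := max |dL b| |dR b| + 1 with hM
    have hM0 : 0 ≤ max |dL b| |dR b| := le_trans (abs_nonneg _) (le_max_left _ _)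
    have hM1 : 1 ≤ M := by rw [hM]; linarith
    set ε := min (1 / (2 * M)) ((1 - S0) / (3 * M)) with hε
    have hεpos : 0 < ε :=
      lt_min (by positivity) (div_pos (by linarith) (by linarith))
    have hε1 : ε ≤ 1 / (2 * M) := min_le_left _ _
    have hε2 : ε ≤ (1 - S0) / (3 * M) := min_le_right _ _
    have hMne : (2 * M) ≠ 0 := by linarith
    have hMne3 : (3 * M) ≠ 0 := by linarith
    have hεM1 : ε * M ≤ 1/2 := by
      have h' := mul_le_mul_of_nonneg_right hε1 (by linarith : (0:ℝ) ≤ M)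
      calc ε * M ≤ 1 / (2 * M) * M := h'
        _ = 1/2 := by field_simp
    have hεM2 : ε * M ≤ (1 - S0) / 3 := by
      have h' := mul_le_mul_of_nonneg_right hε2 (by linarith : (0:ℝ) ≤ M)
      calc ε * M ≤ (1 - S0) / (3 * M) * M := h'
        _ = (1 - S0) / 3 := by field_simp
    clear_value M ε
    have hgen : ∀ ρ : ℝ, ε * dL b ≤ ρ → ρ ≤ ε * dR b → ρ = ε * deriv (ψ b) m := by
      intro ρ hρ1 hρ2
      have habsL : |dL b| ≤ M := by rw [hM]; nlinarith [le_max_left |dL b| |dR b|]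
      have habsR : |dR b| ≤ M := by rw [hM]; nlinarith [le_max_right |dL b| |dR b|]
      have hρlb : -(ε * M) ≤ ρ := by
        have : -(ε * M) ≤ ε * dL b := by nlinarith [neg_abs_le (dL b), hεpos]
        linarith
      have hρub : ρ ≤ ε * M := by
        have : ε * dR b ≤ ε * M := by nlinarith [le_abs_self (dR b), hεpos]
        linarith
      have h1ρ : (1:ℝ)/2 ≤ 1 - ρ := by linarith
      set ν := fun a => (1 - ρ) * ξ a + (if a = b then ε else 0) with hν
      have hν0 : ∀ a, 0 ≤ ν a := by
        intro a
        show 0 ≤ (1 - ρ) * ξ a + (if a = b then ε else 0)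
        have h1 : 0 ≤ (1 - ρ) * ξ a := mul_nonneg (by linarith) (hξnn a)
        have h2 : (0:ℝ) ≤ (if a = b then ε else 0) := by
          split_ifs
          · exact hεpos.le
          · exact le_rfl
        exact add_nonneg h1 h2
      have hsumX : ∀ X : A → ℝ,
          ∑ a, ν a * X a = (1 - ρ) * (∑ a, ξ a * X a) + ε * X b := by
        intro X
        have e : ∀ a : A, ν a * X a =
            (1 - ρ) * (ξ a * X a) + (if a = b then ε * X a else 0) := by
          intro a
          show ((1 - ρ) * ξ a + (if a = b then ε else 0)) * X a = _
          by_cases hab : a = b <;> simp [hab] <;> ring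
        rw [Finset.sum_congr rfl fun a _ => e a, Finset.sum_add_distrib, ← Finset.mul_sum,
          Finset.sum_ite_eq' Finset.univ b (fun a => ε * X a)]
        simp
      have hνsum : ∑ a, ν a = (1 - ρ) * S0 + ε := by
        have := hsumX (fun _ => 1); simpa using this
      have hνpos : 0 < ∑ a, ν a := by
        rw [hνsum]
        nlinarith [mul_pos (show (0:ℝ) < 1 - ρ by linarith) hSpos]
      have hνlt : ∑ a, ν a < 1 := by
        rw [hνsum]
        have hS1b : S0 ≤ 1 := hξlt.le
        have e1 : (1 - ρ) * S0 ≤ S0 + ε * M := by nlinarith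
        have e2 : ε ≤ ε * M := by nlinarith [hεpos]
        nlinarith
      have hL1 : ∑ a, ν a * dL a ≤ 1 := by
        rw [hsumX dL, ← hLamLdef, hLamLe]; linarith
      have hR1 : 1 ≤ ∑ a, ν a * dR a := by
        rw [hsumX dR, ← hLamRdef, hLamRe]; linarith
      obtain ⟨_, hst⟩ := hforce ν hν0 hνpos hνlt hL1 hR1
      rw [hsumX (fun a => deriv (ψ a) m)] at hst
      rw [show (∑ a, ξ a * deriv (ψ a) m) = 1 from hstat] at hst
      linarith
    have h1 := hgen (ε * dL b) le_rfl
      (by nlinarith [hdLR b, hεpos])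
    have h2 := hgen (ε * dR b) (by nlinarith [hdLR b, hεpos]) le_rfl
    exact ⟨mul_left_cancel₀ (ne_of_gt hεpos) h1, mul_left_cancel₀ (ne_of_gt hεpos) h2⟩
  -- now the direction h
  have hηa : ∀ a, (ξ + t • h) a = ξ a + t * h a := fun a => rfl
  have hηnn : ∀ a, 0 ≤ (ξ + t • h) a := fun a => by rw [hηa]; exact htnn a
  have hηsum : ∑ a, (ξ + t • h) a = ∑ a, (ξ a + t * h a) :=
    Finset.sum_congr rfl fun a _ => hηa a
  have hηpos : 0 < ∑ a, (ξ + t • h) a := by rw [hηsum]; exact htpos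
  have hηlt : ∑ a, (ξ + t • h) a < 1 := by rw [hηsum]; exact htlt
  have hηc : ∑ a, (ξ + t • h) a * deriv (ψ a) m = 1 := by
    have e : ∑ a, (ξ + t • h) a * deriv (ψ a) m =
        ∑ a, ξ a * deriv (ψ a) m + t * ∑ a, deriv (ψ a) m * h a := by
      rw [Finset.mul_sum, ← Finset.sum_add_distrib]
      exact Finset.sum_congr rfl fun a _ => by rw [hηa]; ring
    rw [e, hstat, horth]
    ring
  have hηL : ∑ a, (ξ + t • h) a * dL a ≤ 1 := by
    have e : ∑ a, (ξ + t • h) a * dL a = ∑ a, (ξ + t • h) a * deriv (ψ a) m :=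
      Finset.sum_congr rfl fun a _ => by rw [(hkey a).1]
    rw [e, hηc]
  have hηR : 1 ≤ ∑ a, (ξ + t • h) a * dR a := by
    have e : ∑ a, (ξ + t • h) a * dR a = ∑ a, (ξ + t • h) a * deriv (ψ a) m :=
      Finset.sum_congr rfl fun a _ => by rw [(hkey a).2]
    rw [e, hηc]
  obtain ⟨hb1, hb2, hb3, hb4⟩ := hs (ξ + t • h) hηnn hηpos hηlt
  have hmin := hminOf (ξ + t • h) hηnn hηL hηR
  have hPs' : Psistar s₀ ψ (ξ + t • h) =
      ∑ a, (ξ + t • h) a * ψ a (s (ξ + t • h)) - s (ξ + t • h) := hb3.csInf_eq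
  have hle1 : (∑ a, (ξ + t • h) a * ψ a (s (ξ + t • h)) - s (ξ + t • h)) ≤
      ∑ a, (ξ + t • h) a * ψ a m - m := hb3.2 ⟨m, hmle, rfl⟩
  have hle2 : (∑ a, (ξ + t • h) a * ψ a m - m) ≤
      ∑ a, (ξ + t • h) a * ψ a (s (ξ + t • h)) - s (ξ + t • h) := hmin _ hb1.le
  have heq : (∑ a, (ξ + t • h) a * ψ a m - m) = Psistar s₀ ψ (ξ + t • h) := by
    rw [hPs']; linarith
  have hms : m = s (ξ + t • h) := hb4 m hmle heq
  refine ⟨hms.symm, ?_⟩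
  have hPξ : Psistar s₀ ψ ξ = ∑ a, ξ a * ψ a m - m := hleast.csInf_eq
  rw [← heq, hPξ]
  have e : ∑ a, (ξ + t • h) a * ψ a m =
      ∑ a, ξ a * ψ a m + t * ∑ a, ψ a m * h a := by
    rw [Finset.mul_sum, ← Finset.sum_add_distrib]
    exact Finset.sum_congr rfl fun a _ => by rw [hηa]; ring
  rw [e]
  ring
end

section
/- Let (Γ_n)_{n≥0} be an inhomogeneous Galton–Watson process: Γ_{n+1} = ∑_{k=1}^{Γ_n} ν_n^{(k)}, where for each n the ν_n^{(k)} (k ≥ 1) are i.i.d. copies of a nonnegative integer random variable ν_n, independent of the process up to time n, with mean m_n = E[ν_n] ∈ (0,∞). Fix α > 1 and n ≥ 1, and suppose that for all 0 ≤ i < n there exists λ_i > 0 with E[e^{λ_i ν_i}] ≤ e^{α λ_i m_i}. Then for all δ > 0 and all integers ℓ ≥ 1, P(Γ_n ≥ ℓ · max{1, (α+δ)^n max_{0≤i<n} ∏_{j=i}^{n-1} m_j} | Γ_0 = ℓ) ≤ n · exp(-(δℓ/(α+δ)) min_{0≤i<n} λ_i + max_{0≤i<n} λ_i). -/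
open MeasureTheory ProbabilityTheory Finset

/-! With `β = α + δ`, put `t_i = ℓ s_i`, where `s_0 = 1` and `s_{i+1} = max 1 (β m_i s_i)`
(`threshold β m`). These thresholds satisfy `α m_i t_i + δℓ/β ≤ t_{i+1}`, and `t_n` is at most
the threshold of the statement. Since `Γ_0 = t_0`, on `{Γ_n ≥ t_n}` some `i < n` has `Γ_i ≤ t_i`
and `Γ_{i+1} ≥ t_{i+1}`. On `{Γ_i = g}` the variable `Γ_{i+1}` is a sum of `g` i.i.d. copies of
`ν_i` from row `i`, which is independent of the rows below it, so the Chernoff bound gives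
`P(Γ_i ≤ t_i, Γ_{i+1} ≥ t_{i+1}) ≤ exp(-λ_i t_{i+1} + α λ_i m_i t_i) ≤ exp(-λ_i δℓ/β)`.
A union bound over `i < n` concludes. -/

lemma measurable_sum_range_apply {Ω : Type*} {mΩ : MeasurableSpace Ω} {N : Ω → ℕ}
    (hN : Measurable N) {u : ℕ → Ω → ℕ} (hu : ∀ k, Measurable (u k)) :
    Measurable fun ω => ∑ k ∈ range (N ω), u k ω :=
  (measurable_from_prod_countable_left (f := fun p : Ω × ℕ => ∑ k ∈ range p.2, u k p.1)
    fun g => Finset.measurable_sum (range g) fun k _ => hu k).comp (measurable_id.prodMk hN)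

lemma mul_add_div_add_le_max_one {α δ : ℝ} (hα : 0 ≤ α) (hδ : 0 ≤ δ) (hαδ : 0 < α + δ) (q : ℝ) :
    α * q + δ / (α + δ) ≤ max 1 ((α + δ) * q) := by
  rcases le_or_gt 1 ((α + δ) * q) with h | h
  · have : δ / (α + δ) ≤ δ * q := by
      rw [div_le_iff₀ hαδ]; nlinarith
    exact le_max_of_le_right (by linarith)
  · have : α * q ≤ α / (α + δ) := by
      rw [le_div_iff₀ hαδ]; nlinarith
    refine le_max_of_le_left ?_
    calc α * q + δ / (α + δ) ≤ α / (α + δ) + δ / (α + δ) := by linarith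
      _ = 1 := by rw [← add_div, div_self hαδ.ne']

lemma exists_crossing {a t : ℕ → ℝ} (h0 : a 0 ≤ t 0) {n : ℕ} (hn : t n ≤ a n) (hpos : 0 < n) :
    ∃ i < n, a i ≤ t i ∧ t (i + 1) ≤ a (i + 1) := by
  induction n, hpos using Nat.le_induction with
  | base => exact ⟨0, one_pos, h0, hn⟩
  | succ n hpos ih =>
    rcases le_or_gt (a n) (t n) with h | h
    · exact ⟨n, n.lt_succ_self, h, hn⟩
    · obtain ⟨i, hi, hit⟩ := ih h.le
      exact ⟨i, hi.trans n.lt_succ_self, hit⟩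

lemma measureReal_le_sum_crossing {Ω : Type*} [MeasurableSpace Ω] {μ : Measure Ω}
    [IsFiniteMeasure μ] {X : ℕ → Ω → ℝ} {t : ℕ → ℝ} (h0 : ∀ ω, X 0 ω ≤ t 0) {n : ℕ}
    (hn : 0 < n) :
    μ.real {ω | t n ≤ X n ω} ≤
      ∑ i ∈ range n, μ.real {ω | X i ω ≤ t i ∧ t (i + 1) ≤ X (i + 1) ω} := by
  refine (measureReal_mono (fun ω hω => ?_) (measure_ne_top μ _)).trans
    (measureReal_biUnion_finset_le _ _)
  obtain ⟨i, hi, hcross⟩ := exists_crossing (a := fun i => X i ω) (h0 ω) hω hn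
  exact Set.mem_biUnion (mem_range.2 hi) hcross

lemma measureReal_le_and_le_le_of_level_le {Ω : Type*} [MeasurableSpace Ω] {μ : Measure Ω}
    [IsZeroOrProbabilityMeasure μ] {N : Ω → ℕ} (hN : Measurable N) (S : ℕ → Ω → ℝ)
    {x r c t : ℝ} (hr : 0 ≤ r) (hc : 0 ≤ c) (ht : 0 ≤ t)
    (hS : ∀ g : ℕ, μ.real ({ω | N ω = g} ∩ {ω | x ≤ S g ω}) ≤
      μ.real {ω | N ω = g} * (r * Real.exp (c * g))) :
    μ.real {ω | (N ω : ℝ) ≤ t ∧ x ≤ S (N ω) ω} ≤ r * Real.exp (c * t) := by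
  set s := range (⌊t⌋₊ + 1)
  have hcover : {ω | (N ω : ℝ) ≤ t ∧ x ≤ S (N ω) ω} ⊆
      ⋃ g ∈ s, {ω | N ω = g} ∩ {ω | x ≤ S g ω} := fun ω ⟨hNt, hx⟩ =>
    Set.mem_biUnion (mem_range.2 (Nat.lt_succ_of_le (Nat.le_floor hNt))) ⟨rfl, hx⟩
  have hlevels : ∑ g ∈ s, μ.real {ω | N ω = g} ≤ 1 := by
    rw [← measureReal_biUnion_finset (f := fun g => {ω | N ω = g})
      (fun a _ b _ hab => Set.disjoint_left.2 fun ω ha hb => hab (ha.symm.trans hb))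
      (fun g _ => hN (measurableSet_singleton g)) fun g _ => measure_ne_top μ _]
    exact measureReal_le_one
  calc μ.real {ω | (N ω : ℝ) ≤ t ∧ x ≤ S (N ω) ω}
      ≤ ∑ g ∈ s, μ.real ({ω | N ω = g} ∩ {ω | x ≤ S g ω}) :=
        (measureReal_mono hcover (measure_ne_top μ _)).trans (measureReal_biUnion_finset_le _ _)
    _ ≤ ∑ g ∈ s, μ.real {ω | N ω = g} * (r * Real.exp (c * t)) := by
        refine sum_le_sum fun g hg => (hS g).trans ?_
        have hgt : (g : ℝ) ≤ t :=
          (Nat.cast_le.2 (Nat.lt_succ_iff.1 (mem_range.1 hg))).trans (Nat.floor_le ht)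
        gcongr
    _ = (∑ g ∈ s, μ.real {ω | N ω = g}) * (r * Real.exp (c * t)) := by rw [sum_mul]
    _ ≤ r * Real.exp (c * t) := mul_le_of_le_one_left (by positivity) hlevels

def threshold (β : ℝ) (m : ℕ → ℝ) : ℕ → ℝ
  | 0 => 1
  | i + 1 => max 1 (β * m i * threshold β m i)

section Threshold

variable {β : ℝ} {m : ℕ → ℝ}

lemma one_le_threshold (i : ℕ) : 1 ≤ threshold β m i := by
  cases i with
  | zero => exact le_rfl
  | succ i => exact le_max_left _ _

lemma mul_threshold_add_div_le_threshold_succ {α δ : ℝ} (hα : 0 ≤ α) (hδ : 0 < δ) (i : ℕ) :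
    α * m i * threshold (α + δ) m i + δ / (α + δ) ≤ threshold (α + δ) m (i + 1) := by
  calc α * m i * threshold (α + δ) m i + δ / (α + δ)
      = α * (m i * threshold (α + δ) m i) + δ / (α + δ) := by ring
    _ ≤ max 1 ((α + δ) * (m i * threshold (α + δ) m i)) :=
        mul_add_div_add_le_max_one hα hδ.le (by linarith) _
    _ = threshold (α + δ) m (i + 1) := by rw [threshold, mul_assoc]

lemma exists_threshold_le (hβ : 1 ≤ β) (hm : ∀ i, 0 ≤ m i) {n : ℕ} (hn : 0 < n) :
    ∃ r < n, threshold β m n ≤ max 1 (β ^ n * ∏ j ∈ Ico r n, m j) := by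
  induction n, hn using Nat.le_induction with
  | base => exact ⟨0, one_pos, by simp [threshold]⟩
  | succ n hn ih =>
    obtain ⟨r, hr, hle⟩ := ih
    have hβm : 0 ≤ β * m n := mul_nonneg (by linarith) (hm n)
    rw [threshold]
    rcases le_max_iff.1 hle with hone | hprod
    · refine ⟨n, n.lt_succ_self, max_le_max le_rfl ?_⟩
      rw [Nat.Ico_succ_singleton, prod_singleton, pow_succ']
      calc β * m n * threshold β m n ≤ β * m n * 1 := by gcongr
        _ ≤ β * β ^ n * m n := by nlinarith [one_le_pow₀ (n := n) hβ, hm n]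
    · refine ⟨r, hr.trans n.lt_succ_self, max_le_max le_rfl ?_⟩
      rw [prod_Ico_succ_top hr.le, pow_succ']
      calc β * m n * threshold β m n ≤ β * m n * (β ^ n * ∏ j ∈ Ico r n, m j) := by gcongr
        _ = β * β ^ n * ((∏ j ∈ Ico r n, m j) * m n) := by ring

lemma threshold_le_max_sup' (hβ : 1 ≤ β) (hm : ∀ i, 0 ≤ m i) {n : ℕ} (hn : 0 < n) :
    threshold β m n ≤
      max 1 (β ^ n * (range n).sup' (nonempty_range_iff.2 hn.ne') fun r => ∏ j ∈ Ico r n, m j) := by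
  obtain ⟨r, hr, hle⟩ := exists_threshold_le hβ hm hn
  refine hle.trans (max_le_max le_rfl ?_)
  gcongr
  exact le_sup' (fun r => ∏ j ∈ Ico r n, m j) (mem_range.2 hr)

end Threshold

section Offspring

variable {Ω : Type*} {ν : ℕ → ℕ → Ω → ℕ}

variable (ν) in
abbrev offspringSigma (S : Set (ℕ × ℕ)) : MeasurableSpace Ω :=
  ⨆ p ∈ S, MeasurableSpace.comap (ν p.1 p.2) inferInstance

variable (ν) in
def rowSum (i g : ℕ) (ω : Ω) : ℝ :=
  ∑ k ∈ range g, (ν i (k + 1) ω : ℝ)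

lemma measurable_offspringSigma {S : Set (ℕ × ℕ)} {p : ℕ × ℕ} (hp : p ∈ S) :
    Measurable[offspringSigma ν S] (ν p.1 p.2) :=
  Measurable.of_comap_le <|
    le_biSup (fun p : ℕ × ℕ => MeasurableSpace.comap (ν p.1 p.2) inferInstance) hp

lemma offspringSigma_mono {S T : Set (ℕ × ℕ)} (h : S ⊆ T) :
    offspringSigma ν S ≤ offspringSigma ν T :=
  biSup_mono h

lemma measurable_generation {Γ : ℕ → Ω → ℕ} {ℓ : ℕ} (hΓ0 : ∀ ω, Γ 0 ω = ℓ)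
    (hΓ : ∀ n ω, Γ (n + 1) ω = ∑ k ∈ range (Γ n ω), ν n (k + 1) ω) (i : ℕ) :
    Measurable[offspringSigma ν {p | p.1 < i}] (Γ i) := by
  induction i with
  | zero => rw [funext hΓ0]; exact measurable_const
  | succ i ih =>
    rw [funext (hΓ i)]
    exact measurable_sum_range_apply
      (ih.mono (offspringSigma_mono fun p hp => Nat.lt_succ_of_lt hp) le_rfl)
      fun k => measurable_offspringSigma (p := (i, k + 1)) i.lt_succ_self

lemma measurable_rowSum (i g : ℕ) :
    Measurable[offspringSigma ν {p | p.1 = i}] (rowSum ν i g) := by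
  unfold rowSum
  exact Finset.measurable_sum _ fun k _ =>
    measurable_from_top.comp (measurable_offspringSigma (p := (i, k + 1)) rfl)

variable [MeasurableSpace Ω] {μ : Measure Ω}

lemma offspringSigma_le (hmeas : ∀ n k, Measurable (ν n k)) (S : Set (ℕ × ℕ)) :
    offspringSigma ν S ≤ ‹MeasurableSpace Ω› :=
  iSup₂_le fun p _ => (hmeas p.1 p.2).comap_le

lemma indep_offspringSigma (hmeas : ∀ n k, Measurable (ν n k))
    (hindep : iIndepFun (fun p : ℕ × ℕ => ν p.1 p.2) μ) {S T : Set (ℕ × ℕ)}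
    (hST : Disjoint S T) :
    Indep (offspringSigma ν S) (offspringSigma ν T) μ :=
  indep_iSup_of_disjoint (m := fun p : ℕ × ℕ => MeasurableSpace.comap (ν p.1 p.2) inferInstance)
    (fun p => (hmeas p.1 p.2).comap_le) hindep.iIndep hST

lemma measureReal_generation_eq_inter_rowSum_ge (hmeas : ∀ n k, Measurable (ν n k))
    (hindep : iIndepFun (fun p : ℕ × ℕ => ν p.1 p.2) μ) {Γ : ℕ → Ω → ℕ} {ℓ : ℕ}
    (hΓ0 : ∀ ω, Γ 0 ω = ℓ) (hΓ : ∀ n ω, Γ (n + 1) ω = ∑ k ∈ range (Γ n ω), ν n (k + 1) ω)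
    (i g : ℕ) (x : ℝ) :
    μ.real ({ω | Γ i ω = g} ∩ {ω | x ≤ rowSum ν i g ω}) =
      μ.real {ω | Γ i ω = g} * μ.real {ω | x ≤ rowSum ν i g ω} := by
  have hdisj : Disjoint {p : ℕ × ℕ | p.1 < i} {p | p.1 = i} :=
    Set.disjoint_left.2 fun p hlt heq => hlt.ne heq
  have h := (Indep_iff _ _ _).1 (indep_offspringSigma hmeas hindep hdisj)
    (Γ i ⁻¹' {g}) (rowSum ν i g ⁻¹' Set.Ici x)
    (measurable_generation hΓ0 hΓ i (measurableSet_singleton g))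
    (measurable_rowSum i g measurableSet_Ici)
  simp only [measureReal_def]
  rw [← ENNReal.toReal_mul]
  exact congrArg ENNReal.toReal h

lemma measureReal_rowSum_ge_le [IsFiniteMeasure μ] (hmeas : ∀ n k, Measurable (ν n k))
    (hindep : iIndepFun (fun p : ℕ × ℕ => ν p.1 p.2) μ)
    (hid : ∀ n k, IdentDistrib (ν n k) (ν n 0) μ μ) {i : ℕ} {θ : ℝ} (hθ : 0 ≤ θ)
    (hint : Integrable (fun ω => Real.exp (θ * ν i 0 ω)) μ) (g : ℕ) (x : ℝ) :
    μ.real {ω | x ≤ rowSum ν i g ω} ≤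
      Real.exp (-θ * x) * mgf (fun ω => (ν i 0 ω : ℝ)) μ θ ^ g := by
  set X : ℕ → Ω → ℝ := fun k ω => ν i (k + 1) ω
  have hXmeas : ∀ k, Measurable (X k) := fun k => measurable_from_top.comp (hmeas i (k + 1))
  have hXindep : iIndepFun X μ :=
    (hindep.precomp (g := fun k => (i, k + 1)) fun a b h => by simpa using h).comp
      (fun _ (z : ℕ) => (z : ℝ)) fun _ => measurable_from_top
  have hXid : ∀ k, IdentDistrib (X k) (fun ω => (ν i 0 ω : ℝ)) μ μ :=
    fun k => (hid i (k + 1)).comp measurable_from_top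
  have hXint : ∀ k ∈ range g, Integrable (fun ω => Real.exp (θ * X k ω)) μ :=
    fun k _ => ((hXid k).comp (measurable_const_mul θ).exp).integrable_iff.2 hint
  have hsum : rowSum ν i g = ∑ k ∈ range g, X k := by
    ext ω; simp [rowSum, X]
  rw [hsum]
  refine (measure_ge_le_exp_mul_mgf x hθ (hXindep.integrable_exp_mul_sum hXmeas hXint)).trans_eq ?_
  rw [hXindep.mgf_sum hXmeas,
    prod_congr rfl fun k _ => congrFun (mgf_congr_identDistrib (hXid k)) θ, prod_const, card_range]

lemma measureReal_generation_le_and_succ_ge [IsZeroOrProbabilityMeasure μ]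
    (hmeas : ∀ n k, Measurable (ν n k)) (hindep : iIndepFun (fun p : ℕ × ℕ => ν p.1 p.2) μ)
    (hid : ∀ n k, IdentDistrib (ν n k) (ν n 0) μ μ) {Γ : ℕ → Ω → ℕ} {ℓ : ℕ}
    (hΓ0 : ∀ ω, Γ 0 ω = ℓ) (hΓ : ∀ n ω, Γ (n + 1) ω = ∑ k ∈ range (Γ n ω), ν n (k + 1) ω)
    {i : ℕ} {θ c : ℝ} (hθ : 0 ≤ θ) (hint : Integrable (fun ω => Real.exp (θ * ν i 0 ω)) μ)
    (hmgf : mgf (fun ω => (ν i 0 ω : ℝ)) μ θ ≤ Real.exp c) (hc : 0 ≤ c) {t : ℝ} (ht : 0 ≤ t)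
    (x : ℝ) :
    μ.real {ω | (Γ i ω : ℝ) ≤ t ∧ x ≤ Γ (i + 1) ω} ≤ Real.exp (-θ * x + c * t) := by
  have hsucc : ∀ ω, (Γ (i + 1) ω : ℝ) = rowSum ν i (Γ i ω) ω := fun ω => by
    simp [hΓ, rowSum]
  simp_rw [hsucc, Real.exp_add]
  refine measureReal_le_and_le_le_of_level_le
    ((measurable_generation hΓ0 hΓ i).mono (offspringSigma_le hmeas _) le_rfl) (rowSum ν i)
    (Real.exp_pos _).le hc ht fun g => ?_
  rw [measureReal_generation_eq_inter_rowSum_ge hmeas hindep hΓ0 hΓ]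
  gcongr
  calc μ.real {ω | x ≤ rowSum ν i g ω}
      ≤ Real.exp (-θ * x) * mgf (fun ω => (ν i 0 ω : ℝ)) μ θ ^ g :=
        measureReal_rowSum_ge_le hmeas hindep hid hθ hint g x
    _ ≤ Real.exp (-θ * x) * Real.exp c ^ g := by
        gcongr
        exact mgf_nonneg
    _ = Real.exp (-θ * x) * Real.exp (c * g) := by rw [← Real.exp_nat_mul, mul_comm c]

lemma measureReal_threshold_crossing_le [IsZeroOrProbabilityMeasure μ]
    (hmeas : ∀ n k, Measurable (ν n k)) (hindep : iIndepFun (fun p : ℕ × ℕ => ν p.1 p.2) μ)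
    (hid : ∀ n k, IdentDistrib (ν n k) (ν n 0) μ μ) {Γ : ℕ → Ω → ℕ} {ℓ : ℕ}
    (hΓ0 : ∀ ω, Γ 0 ω = ℓ) (hΓ : ∀ n ω, Γ (n + 1) ω = ∑ k ∈ range (Γ n ω), ν n (k + 1) ω)
    {m : ℕ → ℝ} {α δ θ : ℝ} {i : ℕ} (hm : 0 ≤ m i) (hα : 0 ≤ α) (hδ : 0 < δ) (hθ : 0 ≤ θ)
    (hint : Integrable (fun ω => Real.exp (θ * ν i 0 ω)) μ)
    (hmgf : mgf (fun ω => (ν i 0 ω : ℝ)) μ θ ≤ Real.exp (α * θ * m i)) :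
    μ.real {ω | (Γ i ω : ℝ) ≤ ℓ * threshold (α + δ) m i ∧
        ℓ * threshold (α + δ) m (i + 1) ≤ Γ (i + 1) ω} ≤
      Real.exp (-θ * (δ * ℓ / (α + δ))) := by
  refine (measureReal_generation_le_and_succ_ge hmeas hindep hid hΓ0 hΓ hθ hint hmgf
    (by positivity) (by positivity [one_le_threshold (β := α + δ) (m := m) i]) _).trans
    (Real.exp_le_exp.2 ?_)
  have hstep := mul_le_mul_of_nonneg_left
    (mul_threshold_add_div_le_threshold_succ (m := m) hα hδ i) (Nat.cast_nonneg' ℓ)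
  have : (ℓ : ℝ) * (δ / (α + δ)) = δ * ℓ / (α + δ) := by ring
  nlinarith

end Offspring

/-- Upper-tail inequality for inhomogeneous Galton–Watson processes
(Aïdékon–Hu–Shi / AHS19, Proposition 2.1): if `Γ_{n+1} = ∑_{k=1}^{Γ_n} ν_n^{(k)}` with
i.i.d. offspring `ν_n^{(k)}` of mean `m_n ∈ (0,∞)`, independent of the past, `Γ_0 = ℓ`,
and for each `i < n` there is `λ_i > 0` with `E[e^{λ_i ν_i}] ≤ e^{α λ_i m_i}` (`α > 1`),
then for all `δ > 0`,
`P(Γ_n ≥ ℓ·max{1, (α+δ)^n max_{i<n} ∏_{j=i}^{n-1} m_j}) ≤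
  n·exp(-(δℓ/(α+δ)) min_{i<n} λ_i + max_{i<n} λ_i)`. -/
theorem stmt12 {Ω : Type*} [MeasureSpace Ω] [IsProbabilityMeasure (ℙ : Measure Ω)]
    (ν : ℕ → ℕ → Ω → ℕ) (hmeas : ∀ n k, Measurable (ν n k))
    (hindep : iIndepFun (fun p : ℕ × ℕ => ν p.1 p.2) ℙ)
    (hid : ∀ n k, IdentDistrib (ν n k) (ν n 0) ℙ ℙ)
    (Γ : ℕ → Ω → ℕ) (ℓ : ℕ)
    (hΓ0 : ∀ ω, Γ 0 ω = ℓ)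
    (hΓ : ∀ n ω, Γ (n + 1) ω = ∑ k ∈ Finset.range (Γ n ω), ν n (k + 1) ω)
    (m : ℕ → ℝ) (hmpos : ∀ i, 0 < m i)
    (α δ : ℝ) (hα : 1 < α) (hδ : 0 < δ)
    (n : ℕ) (hn : 1 ≤ n)
    (lam : ℕ → ℝ) (hlampos : ∀ i < n, 0 < lam i)
    (hint : ∀ i < n, Integrable (fun ω => Real.exp (lam i * ν i 0 ω)))
    (hmgf : ∀ i < n, (∫ ω, Real.exp (lam i * ν i 0 ω)) ≤ Real.exp (α * lam i * m i)) :
    (ℙ {ω | (ℓ : ℝ) * max 1 ((α + δ) ^ n *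
          (Finset.range n).sup' (Finset.nonempty_range_iff.mpr (by omega))
            (fun i => ∏ j ∈ Finset.Ico i n, m j)) ≤ (Γ n ω : ℝ)}).toReal
      ≤ n * Real.exp (-(δ * ℓ / (α + δ)) *
            ((Finset.range n).inf' (Finset.nonempty_range_iff.mpr (by omega)) lam) +
          (Finset.range n).sup' (Finset.nonempty_range_iff.mpr (by omega)) lam) := by
  set lmin := (range n).inf' (nonempty_range_iff.2 (by omega)) lam
  set lmax := (range n).sup' (nonempty_range_iff.2 (by omega)) lam
  set t : ℕ → ℝ := fun i => ℓ * threshold (α + δ) m i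
  have hcrossing : ∀ i ∈ range n, (ℙ : Measure Ω).real {ω | (Γ i ω : ℝ) ≤ t i ∧
      t (i + 1) ≤ Γ (i + 1) ω} ≤ Real.exp (-(δ * ℓ / (α + δ)) * lmin + lmax) := by
    intro i hi
    have hin := mem_range.1 hi
    refine (measureReal_threshold_crossing_le hmeas hindep hid hΓ0 hΓ (hmpos i).le (by linarith)
      hδ (hlampos i hin).le (hint i hin) (hmgf i hin)).trans (Real.exp_le_exp.2 ?_)
    have hlmin : lmin ≤ lam i := inf'_le lam hi
    have hlmax : 0 < lmax := (hlampos i hin).trans_le (le_sup' lam hi)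
    have hgap : 0 ≤ δ * ℓ / (α + δ) := by positivity
    nlinarith
  calc (ℙ : Measure Ω).real _ ≤ (ℙ : Measure Ω).real {ω | t n ≤ Γ n ω} :=
        measureReal_mono fun ω hω => le_trans (mul_le_mul_of_nonneg_left
          (threshold_le_max_sup' (by linarith) (fun i => (hmpos i).le) hn) ℓ.cast_nonneg) hω
    _ ≤ ∑ i ∈ range n, (ℙ : Measure Ω).real {ω | (Γ i ω : ℝ) ≤ t i ∧ t (i + 1) ≤ Γ (i + 1) ω} :=
        measureReal_le_sum_crossing (X := fun i ω => Γ i ω)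
          (fun ω => by simp [t, hΓ0, threshold]) hn
    _ ≤ ∑ i ∈ range n, Real.exp (-(δ * ℓ / (α + δ)) * lmin + lmax) := sum_le_sum hcrossing
    _ = n * Real.exp (-(δ * ℓ / (α + δ)) * lmin + lmax) := by
        rw [sum_const, card_range, nsmul_eq_mul]
end

section
/- Let (k_j)_{j≥1} be a sequence of positive integers with k_n = (k_1+n-1)^4, and let (ξ_j)_{j≥1} be a bounded real sequence. Set K_n = ∑_{j=1}^n k_j and suppose liminf_n (∑_{j≤n} ξ_j k_j)/K_n = α and limsup_n (∑_{j≤n} ξ_j k_j)/K_n = β, with all ξ_j ∈ [0,1]. Let (x_n) be any real sequence with |x_{K_n} - ∑_{j≤n} ξ_j k_j| ≤ n and |x_k - x_{K_n}| ≤ k_{n+1} for K_n ≤ k ≤ K_{n+1}. Then liminf_{k→∞} x_k/k = α and limsup_{k→∞} x_k/k = β. -/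
open Filter

lemma aux_sub_tendsto {u v : ℕ → ℝ} (h : Tendsto (fun n => u n - v n) atTop (nhds 0))
    (h1 : IsBoundedUnder (· ≤ ·) atTop v) (h2 : IsBoundedUnder (· ≥ ·) atTop v) :
    liminf u atTop = liminf v atTop ∧ limsup u atTop = limsup v atTop := by
  have hd : (fun n => u n - v n) = u - v := rfl
  rw [hd] at h
  have hbl : IsBoundedUnder (· ≤ ·) atTop (u - v) := h.isBoundedUnder_le
  have hbg : IsBoundedUnder (· ≥ ·) atTop (u - v) := h.isBoundedUnder_ge
  have hil : liminf (u - v) atTop = 0 := h.liminf_eq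
  have his : limsup (u - v) atTop = 0 := h.limsup_eq
  have e1 : v + (u - v) = u := by funext n; simp
  have e2 : (u - v) + v = u := by funext n; simp
  constructor
  · apply le_antisymm
    · have := liminf_add_le (f := atTop) (u := u - v) (v := v) hbg hbl h2
        h1.isCoboundedUnder_ge
      rw [e2, his, zero_add] at this
      exact this
    · have := le_liminf_add (f := atTop) (u := v) (v := u - v) h2 h1 hbg
        hbl.isCoboundedUnder_ge
      rw [e1, hil, add_zero] at this
      exact this
  · apply le_antisymm
    · have := limsup_add_le (f := atTop) (u := u - v) (v := v) hbg hbl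
        h2.isCoboundedUnder_le h1
      rw [e2, his, zero_add] at this
      exact this
    · have := le_limsup_add (f := atTop) (u := v) (v := u - v) h1
        h2.isCoboundedUnder_le hbl hbg
      rw [e1, hil, add_zero] at this
      exact this

lemma aux_step (n : ℕ) : (n + 1) ^ 5 ≤ n ^ 5 + 32 * (n + 1) ^ 4 := by
  nlinarith [sq_nonneg n, Nat.zero_le n]

/-- Interpolation lemma: with `k_n = (k₁+n-1)⁴`, `K_n = ∑_{j≤n} k_j`, weights
`ξ_j ∈ [0,1]` whose weighted averages have liminf `α` and limsup `β`, and a sequence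
`(x_k)` with `|x_{K_n} - ∑_{j≤n} ξ_j k_j| ≤ n` and `|x_k - x_{K_n}| ≤ k_{n+1}` for
`K_n ≤ k ≤ K_{n+1}`, one has `liminf x_k/k = α` and `limsup x_k/k = β`. -/
theorem stmt15 (k : ℕ → ℕ) (k1 : ℕ) (hk1 : 1 ≤ k1)
    (hk : ∀ n, 1 ≤ n → k n = (k1 + n - 1) ^ 4)
    (ξ : ℕ → ℝ) (hξ : ∀ j, ξ j ∈ Set.Icc (0:ℝ) 1)
    (K : ℕ → ℕ) (hK : ∀ n, K n = ∑ j ∈ Finset.Icc 1 n, k j)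
    (α β : ℝ)
    (hliminf : Filter.liminf
      (fun n => (∑ j ∈ Finset.Icc 1 n, ξ j * k j) / (K n : ℝ)) atTop = α)
    (hlimsup : Filter.limsup
      (fun n => (∑ j ∈ Finset.Icc 1 n, ξ j * k j) / (K n : ℝ)) atTop = β)
    (x : ℕ → ℝ)
    (hx1 : ∀ n, 1 ≤ n → |x (K n) - ∑ j ∈ Finset.Icc 1 n, ξ j * k j| ≤ n)
    (hx2 : ∀ n, 1 ≤ n → ∀ kk, K n ≤ kk → kk ≤ K (n + 1) →
      |x kk - x (K n)| ≤ k (n + 1)) :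
    Filter.liminf (fun kk : ℕ => x kk / kk) atTop = α ∧
    Filter.limsup (fun kk : ℕ => x kk / kk) atTop = β := by
  -- notation
  set S : ℕ → ℝ := fun n => ∑ j ∈ Finset.Icc 1 n, ξ j * k j with hS
  set y : ℕ → ℝ := fun n => S n / (K n : ℝ) with hy
  set u : ℕ → ℝ := fun kk => x kk / kk with hu
  set ε : ℕ → ℝ := fun n => (2 * (k (n+1) : ℝ) + n) / (K n : ℝ) with hε
  set m : ℕ → ℕ := fun kk => Nat.findGreatest (fun n => K n ≤ kk) kk with hm
  -- basic facts
  have hkpos : ∀ j, 1 ≤ j → 1 ≤ k j := by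
    intro j hj
    rw [hk j hj]
    exact Nat.one_le_pow _ _ (by omega)
  have hKrec : ∀ n, K (n+1) = K n + k (n+1) := by
    intro n
    rw [hK, hK, Finset.sum_Icc_succ_top (by omega : 1 ≤ n + 1)]
  have hKmono : Monotone K := by
    apply monotone_nat_of_le_succ
    intro n; rw [hKrec]; omega
  have hKge : ∀ n, n ≤ K n := by
    intro n
    induction n with
    | zero => exact Nat.zero_le _
    | succ p ih => rw [hKrec]; have := hkpos (p+1) (by omega); omega
  have hKpos : ∀ n, 1 ≤ n → 0 < K n := fun n hn => lt_of_lt_of_le (by omega) (hKge n)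
  have hK32 : ∀ n, n ^ 5 ≤ 32 * K n := by
    intro n
    induction n with
    | zero => simp
    | succ p ih =>
        have hkp : (p+1)^4 ≤ k (p+1) := by
          rw [hk (p+1) (by omega)]
          exact Nat.pow_le_pow_left (by omega) 4
        have := aux_step p
        rw [hKrec]; nlinarith
  have hS0 : ∀ n, 0 ≤ S n := by
    intro n
    apply Finset.sum_nonneg
    intro j _
    exact mul_nonneg (hξ j).1 (Nat.cast_nonneg _)
  have hSK : ∀ n, S n ≤ (K n : ℝ) := by
    intro n
    rw [hK]
    push_cast
    apply Finset.sum_le_sum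
    intro j _
    nth_rewrite 2 [← one_mul ((k j : ℝ))]
    exact mul_le_mul_of_nonneg_right (hξ j).2 (Nat.cast_nonneg _)
  have hy0 : ∀ n, 0 ≤ y n := fun n => div_nonneg (hS0 n) (Nat.cast_nonneg _)
  have hy1 : ∀ n, y n ≤ 1 := by
    intro n
    rcases Nat.eq_zero_or_pos (K n) with h | h
    · simp [hy, h]
    · exact div_le_one_of_le₀ (hSK n) (Nat.cast_nonneg _)
  -- ε tends to 0
  have hε0 : ∀ n, 0 ≤ ε n := by
    intro n
    apply div_nonneg _ (Nat.cast_nonneg _)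
    positivity
  have hεtendsto : Tendsto ε atTop (nhds 0) := by
    apply squeeze_zero' (Eventually.of_forall hε0)
      (g := fun n : ℕ => 1056 / (n : ℝ))
    · filter_upwards [eventually_ge_atTop (max 1 k1)] with n hn
      have hn1 : 1 ≤ n := le_trans (le_max_left _ _) hn
      have hnk1 : k1 ≤ n := le_trans (le_max_right _ _) hn
      have hknat : k (n+1) = (k1 + n) ^ 4 := by
        have he : k1 + (n+1) - 1 = k1 + n := by omega
        rw [hk (n+1) (by omega), he]
      have hnat : (2 * k (n+1) + n) * n ≤ 1056 * K n := by
        have h16 : (k1 + n) ^ 4 ≤ 16 * n ^ 4 := by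
          calc (k1 + n) ^ 4 ≤ (2 * n) ^ 4 := Nat.pow_le_pow_left (by omega) 4
            _ = 16 * n ^ 4 := by ring
        have h32 := hK32 n
        have hn25 : n ^ 2 ≤ n ^ 5 := Nat.pow_le_pow_right hn1 (by omega)
        rw [hknat]
        nlinarith [h16, h32, hn25]
      rw [hε]
      rw [div_le_div_iff₀ (by exact_mod_cast hKpos n hn1) (by exact_mod_cast hn1)]
      calc (2 * (k (n+1) : ℝ) + n) * n = ((2 * k (n+1) + n) * n : ℕ) := by push_cast; ring
        _ ≤ ((1056 * K n : ℕ) : ℝ) := by exact_mod_cast hnat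
        _ = 1056 * (K n : ℝ) := by push_cast; ring
    · exact tendsto_const_div_atTop_nhds_zero_nat 1056
  -- the master error bound
  have herr : ∀ n, 1 ≤ n → ∀ kk, K n ≤ kk → kk ≤ K (n+1) → |x kk / kk - y n| ≤ ε n := by
    intro n hn kk hlow hhigh
    have hd1 : (1 : ℝ) ≤ (K n : ℝ) := by exact_mod_cast hKpos n hn
    have hdc : (K n : ℝ) ≤ (kk : ℝ) := by exact_mod_cast hlow
    have hc0 : (0 : ℝ) < (kk : ℝ) := lt_of_lt_of_le (by linarith) hdc
    have hd0 : (0 : ℝ) < (K n : ℝ) := by linarith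
    have hcde : (kk : ℝ) ≤ (K n : ℝ) + (k (n+1) : ℝ) := by
      have := hKrec n; exact_mod_cast hhigh.trans_eq this
    have hab1 : |x kk - x (K n)| ≤ (k (n+1) : ℝ) := hx2 n hn kk hlow hhigh
    have hab2 : |x (K n) - S n| ≤ (n : ℝ) := hx1 n hn
    have hab : |x kk - S n| ≤ (k (n+1) : ℝ) + n := by
      calc |x kk - S n| ≤ |x kk - x (K n)| + |x (K n) - S n| := abs_sub_le _ _ _
        _ ≤ _ := add_le_add hab1 hab2
    have key : |x kk * K n - kk * S n| ≤ (2 * (k (n+1) : ℝ) + n) * kk := by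
      have h1 := abs_le.1 hab
      have hb0 := hS0 n
      have hbd := hSK n
      have he0 : (0 : ℝ) ≤ (k (n+1) : ℝ) := Nat.cast_nonneg _
      have hn0 : (0 : ℝ) ≤ (n : ℝ) := Nat.cast_nonneg _
      rw [abs_le]
      constructor
      · nlinarith [h1.1, h1.2]
      · nlinarith [h1.1, h1.2]
    calc |x kk / kk - y n| = |x kk * K n - kk * S n| / (kk * K n) := by
          rw [hy, div_sub_div _ _ hc0.ne' hd0.ne', abs_div,
            abs_of_pos (mul_pos hc0 hd0)]
      _ ≤ ((2 * (k (n+1) : ℝ) + n) * kk) / (kk * K n) := by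
          exact (div_le_div_iff_of_pos_right (mul_pos hc0 hd0)).2 key
      _ = ε n := by
          rw [hε, mul_comm (kk : ℝ) (K n : ℝ), mul_div_mul_right _ _ hc0.ne']
  -- properties of m
  have hmprop : ∀ kk, K 1 ≤ kk → 1 ≤ m kk ∧ K (m kk) ≤ kk ∧ kk ≤ K (m kk + 1) := by
    intro kk hkk
    have h1kk : 1 ≤ kk := le_trans (hKpos 1 le_rfl) hkk
    have hm1 : 1 ≤ m kk := Nat.le_findGreatest h1kk hkk
    have hspec : K (m kk) ≤ kk :=
      Nat.findGreatest_spec (P := fun n => K n ≤ kk) h1kk hkk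
    refine ⟨hm1, hspec, ?_⟩
    by_contra hcon
    push_neg at hcon
    have hle : m kk + 1 ≤ kk := le_trans (hKge _) hcon.le
    exact Nat.findGreatest_is_greatest (P := fun n => K n ≤ kk)
      (Nat.lt_succ_self _) hle hcon.le
  have hmtendsto : Tendsto m atTop atTop := by
    apply tendsto_atTop_atTop.2
    intro N
    exact ⟨K N, fun kk hkk => Nat.le_findGreatest (le_trans (hKge N) hkk) hkk⟩
  -- eventual error along the full sequence
  have hEvErr : ∀ᶠ kk in atTop, |u kk - y (m kk)| ≤ ε (m kk) := by
    filter_upwards [eventually_ge_atTop (K 1)] with kk hkk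
    obtain ⟨h1, h2, h3⟩ := hmprop kk hkk
    exact herr (m kk) h1 kk h2 h3
  have hεm : Tendsto (fun kk => ε (m kk)) atTop (nhds 0) := hεtendsto.comp hmtendsto
  have hsub1 : Tendsto (fun kk => u kk - y (m kk)) atTop (nhds 0) := by
    apply squeeze_zero_norm' _ hεm
    filter_upwards [hEvErr] with kk h using by simpa [Real.norm_eq_abs] using h
  have hbdyc : IsBoundedUnder (· ≤ ·) atTop (fun kk => y (m kk)) :=
    isBoundedUnder_of ⟨1, fun kk => hy1 _⟩
  have hbdyc' : IsBoundedUnder (· ≥ ·) atTop (fun kk => y (m kk)) :=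
    isBoundedUnder_of ⟨0, fun kk => hy0 _⟩
  have hlim1 := aux_sub_tendsto hsub1 hbdyc hbdyc'
  -- subsequence K
  have hKtendsto : Tendsto K atTop atTop :=
    tendsto_atTop_atTop.2 fun N => ⟨N, fun n hn => le_trans hn (hKge n)⟩
  have hsub2 : Tendsto (fun n => u (K n) - y n) atTop (nhds 0) := by
    apply squeeze_zero_norm' _ hεtendsto
    filter_upwards [eventually_ge_atTop 1] with n hn
    have := herr n hn (K n) le_rfl (hKmono (Nat.le_succ n))
    simpa [Real.norm_eq_abs, hu] using this
  have hbdy : IsBoundedUnder (· ≤ ·) atTop y := isBoundedUnder_of ⟨1, hy1⟩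
  have hbdy' : IsBoundedUnder (· ≥ ·) atTop y := isBoundedUnder_of ⟨0, hy0⟩
  have hlim2 := aux_sub_tendsto hsub2 hbdy hbdy'
  -- eventual bounds on u and u ∘ K
  have hub : ∀ᶠ kk in atTop, u kk ≤ 2 := by
    filter_upwards [hEvErr, hεm.eventually_le_const (by norm_num : (0:ℝ) < 1)]
      with kk h1 h2
    have h3 := (abs_le.1 h1).2
    have := hy1 (m kk)
    linarith
  have hlb : ∀ᶠ kk in atTop, (-1 : ℝ) ≤ u kk := by
    filter_upwards [hEvErr, hεm.eventually_le_const (by norm_num : (0:ℝ) < 1)]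
      with kk h1 h2
    have h3 := (abs_le.1 h1).1
    have := hy0 (m kk)
    linarith
  have hbuU : IsBoundedUnder (· ≤ ·) atTop u := ⟨2, by simpa [eventually_map] using hub⟩
  have hbuL : IsBoundedUnder (· ≥ ·) atTop u := ⟨-1, by simpa [eventually_map] using hlb⟩
  have hbuKU : IsBoundedUnder (· ≤ ·) atTop (fun n => u (K n)) := by
    refine ⟨2, ?_⟩
    rw [eventually_map]
    filter_upwards [eventually_ge_atTop 1,
      hεtendsto.eventually_le_const (by norm_num : (0:ℝ) < 1)] with n hn hε1
    have h2 := (abs_le.1 (herr n hn (K n) le_rfl (hKmono (Nat.le_succ n)))).2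
    have h3 := hy1 n
    linarith
  -- filter comparison along m
  have hcob_ge_m : IsCoboundedUnder (· ≥ ·) (map m atTop) y :=
    IsBoundedUnder.isCoboundedUnder_ge (isBoundedUnder_of ⟨1, hy1⟩)
  have hcob_le_m : IsCoboundedUnder (· ≤ ·) (map m atTop) y :=
    IsBoundedUnder.isCoboundedUnder_le (isBoundedUnder_of ⟨0, hy0⟩)
  have hineq1 : liminf y atTop ≤ liminf (fun kk => y (m kk)) atTop := by
    have h := liminf_le_liminf_of_le (hmtendsto : map m atTop ≤ atTop) hbdy' hcob_ge_m
    rwa [← liminf_comp] at h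
  have hineq2 : limsup (fun kk => y (m kk)) atTop ≤ limsup y atTop := by
    have h := limsup_le_limsup_of_le (hmtendsto : map m atTop ≤ atTop) hcob_le_m hbdy
    rwa [← limsup_comp] at h
  -- filter comparison along K
  have hbuK_map : IsBoundedUnder (· ≤ ·) (map K atTop) u := by
    have := hbuKU
    simpa [IsBoundedUnder, map_map, Function.comp_def] using this
  have hcob_ge_K : IsCoboundedUnder (· ≥ ·) (map K atTop) u :=
    IsBoundedUnder.isCoboundedUnder_ge hbuK_map
  have hbuKL : IsBoundedUnder (· ≥ ·) atTop (fun n => u (K n)) := by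
    refine ⟨-1, ?_⟩
    rw [eventually_map]
    filter_upwards [eventually_ge_atTop 1,
      hεtendsto.eventually_le_const (by norm_num : (0:ℝ) < 1)] with n hn hε1
    have h2 := (abs_le.1 (herr n hn (K n) le_rfl (hKmono (Nat.le_succ n)))).1
    have h3 := hy0 n
    linarith
  have hbuKL_map : IsBoundedUnder (· ≥ ·) (map K atTop) u := by
    simpa [IsBoundedUnder, map_map, Function.comp_def] using hbuKL
  have hcob_le_K : IsCoboundedUnder (· ≤ ·) (map K atTop) u :=
    IsBoundedUnder.isCoboundedUnder_le hbuKL_map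
  have hineq3 : liminf u atTop ≤ liminf (fun n => u (K n)) atTop := by
    have h := liminf_le_liminf_of_le (hKtendsto : map K atTop ≤ atTop) hbuL hcob_ge_K
    rwa [← liminf_comp] at h
  have hineq4 : limsup (fun n => u (K n)) atTop ≤ limsup u atTop := by
    have h := limsup_le_limsup_of_le (hKtendsto : map K atTop ≤ atTop) hcob_le_K hbuU
    rwa [← limsup_comp] at h
  -- conclude
  have hliminfuK : liminf (fun n => u (K n)) atTop = α := hlim2.1.trans hliminf
  have hlimsupuK : limsup (fun n => u (K n)) atTop = β := hlim2.2.trans hlimsup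
  constructor
  · apply le_antisymm
    · exact hineq3.trans_eq hliminfuK
    · calc α = liminf y atTop := hliminf.symm
        _ ≤ liminf (fun kk => y (m kk)) atTop := hineq1
        _ = liminf u atTop := hlim1.1.symm
  · apply le_antisymm
    · calc limsup u atTop = limsup (fun kk => y (m kk)) atTop := hlim1.2
        _ ≤ limsup y atTop := hineq2
        _ = β := hlimsup
    · exact hlimsupuK.symm.trans_le hineq4
end

section
/- Let d ≥ 2, let A be the alphabet of size 2d with involution, let P^{(2)}_n denote the set of pair empirical measures of admissible walks of length n+1 on A (walks (w_i)_{i=1}^{n+1} with w_{i+1} ≠ w_i^{-1}), and let P^{(2)}_b denote the set of probability measures π on A×A, absolutely continuous with respect to the kernel 1_{b≠a^{-1}}, satisfying the balance condition ∑_b π(a,b) = ∑_b π(b,a) for all a. Then every π ∈ P^{(2)}_n whose first marginal ν is 'good' (meaning: for every a ∈ A, either ν(a^{-1}) = 0 or n[ν(a)+ν(a^{-1})] ≤ n-2) is within L^∞-distance K/n of some measure π̃ ∈ P^{(2)}_b ∩ P^{(2)}_n with the same first marginal ν, where K is a constant depending only on d. -/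
/-- `π` is the pair empirical measure of some admissible walk `(w_i)_{i=1}^{n+1}`
(i.e. `w_{i+1} ≠ w_i⁻¹`) on the alphabet. -/
def IsPairEmp {A : Type*} [Fintype A] [DecidableEq A] (inv : A → A) (n : ℕ)
    (π : A → A → ℝ) : Prop :=
  ∃ w : Fin (n + 1) → A,
    (∀ i : Fin n, w i.succ ≠ inv (w i.castSucc)) ∧
    ∀ a b, π a b =
      ((Finset.univ.filter fun i : Fin n => w i.castSucc = a ∧ w i.succ = b).card : ℝ) / n

/-- `π` is a probability measure on `A × A`, absolutely continuous with respect to the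
kernel `1_{b ≠ a⁻¹}`, satisfying the balance condition `∑_b π(a,b) = ∑_b π(b,a)`. -/
def IsBalanced {A : Type*} [Fintype A] (inv : A → A) (π : A → A → ℝ) : Prop :=
  (∀ a b, 0 ≤ π a b) ∧ (∑ a, ∑ b, π a b = 1) ∧
  (∀ a, π a (inv a) = 0) ∧ (∀ a, ∑ b, π a b = ∑ b, π b a)

set_option linter.unusedSectionVars false
set_option linter.unusedVariables false

open Finset

/-- Sum of an indicator over an interval where the predicate is constant. -/
lemma sum_ite_const_real {p : ℕ → Prop} [DecidablePred p] {l r : ℕ} {v : Prop} [Decidable v]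
    (h : ∀ i, l ≤ i → i < r → (p i ↔ v)) :
    ∑ i ∈ Ico l r, (if p i then (1:ℝ) else 0) = if v then ((r - l : ℕ) : ℝ) else 0 := by
  have : ∀ i ∈ Ico l r, (if p i then (1:ℝ) else 0) = (if v then (1:ℝ) else 0) := by
    intro i hi
    rw [mem_Ico] at hi
    by_cases hv : v
    · simp [hv, (h i hi.1 hi.2).2 hv]
    · have hnp : ¬ p i := fun hp => hv ((h i hi.1 hi.2).1 hp)
      simp [hv, hnp]
  rw [Finset.sum_congr rfl this, Finset.sum_const, Nat.card_Ico]
  by_cases hv : v <;> simp [hv]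

/-- If two predicates agree outside a small exceptional set `E`, the filtered counts
over `range n` differ by at most `E.card`. -/
lemma abs_card_filter_sub_le (n : ℕ) (P Q : ℕ → Prop) [DecidablePred P] [DecidablePred Q]
    (E : Finset ℕ) (h : ∀ i, i < n → i ∉ E → (P i ↔ Q i)) :
    |(((range n).filter P).card : ℝ) - (((range n).filter Q).card : ℝ)| ≤ E.card := by
  have hP : (((range n).filter P).card : ℝ) = ∑ i ∈ range n, (if P i then (1:ℝ) else 0) := by
    rw [Finset.card_filter]; push_cast; rfl
  have hQ : (((range n).filter Q).card : ℝ) = ∑ i ∈ range n, (if Q i then (1:ℝ) else 0) := by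
    rw [Finset.card_filter]; push_cast; rfl
  rw [hP, hQ, ← Finset.sum_sub_distrib]
  calc |∑ i ∈ range n, ((if P i then (1:ℝ) else 0) - (if Q i then (1:ℝ) else 0))|
      ≤ ∑ i ∈ range n, |(if P i then (1:ℝ) else 0) - (if Q i then (1:ℝ) else 0)| :=
        Finset.abs_sum_le_sum_abs _ _
    _ ≤ ∑ i ∈ range n, (if i ∈ E then (1:ℝ) else 0) := by
        apply Finset.sum_le_sum
        intro i hi
        by_cases hE : i ∈ E
        · simp only [hE, if_true]
          have h1 : |(if P i then (1:ℝ) else 0) - (if Q i then (1:ℝ) else 0)| ≤ 1 := by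
            by_cases hp : P i <;> by_cases hq : Q i <;> simp [hp, hq]
          exact h1
        · rw [mem_range] at hi
          by_cases hp : P i
          · simp [hp, (h i hi hE).1 hp, hE]
          · have hnq : ¬ Q i := fun hq => hp ((h i hi hE).2 hq)
            simp [hp, hnq, hE]
    _ = ((range n).filter (· ∈ E)).card := by rw [Finset.card_filter]; push_cast; rfl
    _ ≤ E.card := by
        have : (range n).filter (· ∈ E) ⊆ E := fun x hx => (mem_filter.mp hx).2
        exact_mod_cast Finset.card_le_card this

open Finset
lemma sum_Ico_single (F : ℕ → ℝ) (t s : ℕ) (h : s = t + 1) :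
    ∑ i ∈ Ico t s, F i = F t := by
  subst h
  rw [Finset.sum_Ico_succ_top (le_refl t), Finset.Ico_self, Finset.sum_empty, zero_add]

lemma split4 (F : ℕ → ℝ) (n t1 t2 t3 : ℕ) (h1 : t1 ≤ t2) (h2 : t2 ≤ t3) (h3 : t3 ≤ n) :
    ∑ i ∈ Ico 0 n, F i = (∑ i ∈ Ico 0 t1, F i) + (∑ i ∈ Ico t1 t2, F i)
      + (∑ i ∈ Ico t2 t3, F i) + (∑ i ∈ Ico t3 n, F i) := by
  rw [← Finset.sum_Ico_consecutive F (Nat.zero_le t1) (le_trans h1 (le_trans h2 h3)),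
      ← Finset.sum_Ico_consecutive F h1 (le_trans h2 h3),
      ← Finset.sum_Ico_consecutive F h2 h3]
  ring

lemma split7 (F : ℕ → ℝ) (n t1 t2 t3 t4 t5 t6 : ℕ) (h1 : t1 ≤ t2) (h2 : t2 ≤ t3)
    (h3 : t3 ≤ t4) (h4 : t4 ≤ t5) (h5 : t5 ≤ t6) (h6 : t6 ≤ n) :
    ∑ i ∈ Ico 0 n, F i = (∑ i ∈ Ico 0 t1, F i) + (∑ i ∈ Ico t1 t2, F i)
      + (∑ i ∈ Ico t2 t3, F i) + (∑ i ∈ Ico t3 t4, F i) + (∑ i ∈ Ico t4 t5, F i)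
      + (∑ i ∈ Ico t5 t6, F i) + (∑ i ∈ Ico t6 n, F i) := by
  have g1 : t1 ≤ n := by omega
  have g2 : t2 ≤ n := by omega
  have g3 : t3 ≤ n := by omega
  have g4 : t4 ≤ n := by omega
  have g5 : t5 ≤ n := by omega
  rw [← Finset.sum_Ico_consecutive F (Nat.zero_le t1) g1,
      ← Finset.sum_Ico_consecutive F h1 g2,
      ← Finset.sum_Ico_consecutive F h2 g3,
      ← Finset.sum_Ico_consecutive F h3 g4,
      ← Finset.sum_Ico_consecutive F h4 g5,
      ← Finset.sum_Ico_consecutive F h5 h6]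
  ring

lemma abs_diff4 {u1 u2 u3 u4 v1 v2 v3 v4 : ℝ}
    (hu1 : 0 ≤ u1 ∧ u1 ≤ 1) (hu2 : 0 ≤ u2 ∧ u2 ≤ 1) (hu3 : 0 ≤ u3 ∧ u3 ≤ 1)
    (hu4 : 0 ≤ u4 ∧ u4 ≤ 1) (hv1 : 0 ≤ v1 ∧ v1 ≤ 1) (hv2 : 0 ≤ v2 ∧ v2 ≤ 1)
    (hv3 : 0 ≤ v3 ∧ v3 ≤ 1) (hv4 : 0 ≤ v4 ∧ v4 ≤ 1) :
    |(u1 + u2 + u3 + u4) - (v1 + v2 + v3 + v4)| ≤ 4 := by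
  rw [abs_le]
  constructor <;> [nlinarith [hu1.1, hu2.1, hu3.1, hu4.1, hv1.2, hv2.2, hv3.2, hv4.2];
    nlinarith [hu1.2, hu2.2, hu3.2, hu4.2, hv1.1, hv2.1, hv3.1, hv4.1]]

lemma ite01 (P : Prop) [Decidable P] : 0 ≤ (if P then (1:ℝ) else 0) ∧ (if P then (1:ℝ) else 0) ≤ 1 := by
  by_cases h : P <;> simp [h]

open Finset

section
variable {A : Type*} [Fintype A] [DecidableEq A]

def cnt2 (n : ℕ) (f : ℕ → A) (a b : A) : ℕ :=
  ((range n).filter fun i => f i = a ∧ f (i+1) = b).card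

def cnt1 (n : ℕ) (f : ℕ → A) (a : A) : ℕ :=
  ((range n).filter fun i => f i = a).card

lemma sum_cnt2_right (n : ℕ) (f : ℕ → A) (a : A) :
    ∑ b, cnt2 n f a b = cnt1 n f a := by
  classical
  rw [cnt1, Finset.card_eq_sum_card_fiberwise
    (t := (univ : Finset A)) (f := fun i => f (i+1)) (fun x _ => mem_univ _)]
  apply Finset.sum_congr rfl
  intro b _
  rw [cnt2, Finset.filter_filter]

lemma sum_cnt2_left (n : ℕ) (f : ℕ → A) (a : A) :
    ∑ b, cnt2 n f b a = ((range n).filter fun i => f (i+1) = a).card := by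
  classical
  rw [Finset.card_eq_sum_card_fiberwise
    (t := (univ : Finset A)) (f := fun i => f i) (fun x _ => mem_univ _)]
  apply Finset.sum_congr rfl
  intro b _
  rw [cnt2, Finset.filter_filter]
  congr 1
  apply Finset.filter_congr
  intro i _
  exact ⟨fun ⟨h1, h2⟩ => ⟨h2, h1⟩, fun ⟨h1, h2⟩ => ⟨h2, h1⟩⟩

lemma shift_count (n : ℕ) (hn : 1 ≤ n) (f : ℕ → A) (hc : f n = f 0) (a : A) :
    ((range n).filter fun i => f (i+1) = a).card = cnt1 n f a := by
  rw [cnt1, Finset.card_filter, Finset.card_filter]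
  have h1 : ∑ i ∈ range n, (if f (i+1) = a then 1 else 0)
      = ∑ i ∈ Ico 1 (n+1), (if f i = a then 1 else 0) := by
    rw [Finset.sum_Ico_eq_sum_range]
    simp only [Nat.add_sub_cancel]
    apply Finset.sum_congr rfl
    intro i _
    rw [Nat.add_comm 1 i]
  rw [h1, range_eq_Ico,
    ← Finset.sum_Ico_consecutive (fun i => if f i = a then 1 else 0) (Nat.zero_le 1) hn,
    ← Finset.sum_Ico_consecutive (fun i => if f i = a then 1 else 0) hn (Nat.le_succ n)]
  have e0 : ∑ i ∈ Ico 0 1, (if f i = a then 1 else 0) = (if f 0 = a then 1 else 0) := by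
    rw [← Finset.range_eq_Ico, Finset.sum_range_one]
  have e1 : ∑ i ∈ Ico n (n+1), (if f i = a then 1 else 0) = (if f n = a then 1 else 0) := by
    rw [Finset.sum_Ico_succ_top (le_refl n), Finset.Ico_self, Finset.sum_empty, zero_add]
  rw [e0, e1, hc]
  ring

lemma sum_sum_cnt2 (n : ℕ) (f : ℕ → A) :
    ∑ a, ∑ b, cnt2 n f a b = n := by
  classical
  have := Finset.card_eq_sum_card_fiberwise
    (s := range n) (t := (univ : Finset (A × A))) (f := fun i => (f i, f (i+1)))
    (fun x _ => mem_univ _)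
  rw [Finset.card_range] at this
  have h2 : ∑ a, ∑ b, cnt2 n f a b
      = ∑ p : A × A, ((range n).filter fun i => (f i, f (i+1)) = p).card := by
    rw [Fintype.sum_prod_type]
    apply Finset.sum_congr rfl; intro a _
    apply Finset.sum_congr rfl; intro b _
    rw [cnt2]
    congr 1
    apply Finset.filter_congr
    intro i _
    simp [Prod.ext_iff]
  rw [h2, ← this]

lemma isBalanced_of_closed (inv : A → A) (n : ℕ) (hn : 1 ≤ n) (f : ℕ → A)
    (hadm : ∀ i < n, f (i+1) ≠ inv (f i)) (hc : f n = f 0) :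
    IsBalanced inv (fun a b => (cnt2 n f a b : ℝ) / n) := by
  refine ⟨fun a b => by positivity, ?_, ?_, ?_⟩
  · have hn0 : (n : ℝ) ≠ 0 := by positivity
    have : ∑ a, ∑ b, ((cnt2 n f a b : ℝ) / n) = ((∑ a, ∑ b, cnt2 n f a b : ℕ) : ℝ) / n := by
      push_cast
      rw [Finset.sum_div]
      apply Finset.sum_congr rfl
      intro a _
      rw [Finset.sum_div]
    rw [this, sum_sum_cnt2]
    field_simp
  · intro a
    have : cnt2 n f a (inv a) = 0 := by
      rw [cnt2, Finset.card_eq_zero, Finset.filter_eq_empty_iff]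
      intro i hi
      rw [mem_range] at hi
      rintro ⟨h1, h2⟩
      exact hadm i hi (by rw [h1, h2])
    simp [this]
  · intro a
    have cast_sum : ∀ g : A → ℕ, ((∑ b, g b : ℕ) : ℝ) = ∑ b, ((g b : ℕ) : ℝ) := by
      intro g; push_cast; rfl
    have hnat : ∑ b, cnt2 n f b a = cnt1 n f a := by
      rw [sum_cnt2_left, shift_count n hn f hc]
    have h1 : ∑ b, ((cnt2 n f a b : ℝ) / n) = ((cnt1 n f a : ℕ) : ℝ) / n := by
      rw [← Finset.sum_div, ← cast_sum, sum_cnt2_right]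
    have h2 : ∑ b, ((cnt2 n f b a : ℝ) / n) = ((cnt1 n f a : ℕ) : ℝ) / n := by
      rw [← Finset.sum_div, ← cast_sum, hnat]
    rw [h1, h2]

lemma isPairEmp_of (inv : A → A) (n : ℕ) (f : ℕ → A)
    (hadm : ∀ i < n, f (i+1) ≠ inv (f i)) :
    IsPairEmp inv n (fun a b => (cnt2 n f a b : ℝ) / n) := by
  refine ⟨fun i => f i.val, ?_, ?_⟩
  · intro i
    simpa [Fin.val_succ, Fin.coe_castSucc] using hadm i.val i.isLt
  · intro a b
    have key : cnt2 n f a b = (Finset.univ.filter fun i : Fin n =>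
        (fun j : Fin (n+1) => f j.val) i.castSucc = a ∧
        (fun j : Fin (n+1) => f j.val) i.succ = b).card := by
      rw [cnt2, Finset.card_filter, Finset.card_filter]
      rw [← Fin.sum_univ_eq_sum_range (fun i => if f i = a ∧ f (i+1) = b then (1:ℕ) else 0) n]
      apply Finset.sum_congr rfl
      intro i _
      simp [Fin.val_succ, Fin.coe_castSucc]
    show (cnt2 n f a b : ℝ) / n = _
    rw [key]

end

section
open Finset
variable {A : Type*} [Fintype A] [DecidableEq A]

set_option maxHeartbeats 1000000 in
lemma close_walk (inv : A → A) (hinv : Function.Involutive inv) (hfp : ∀ a, inv a ≠ a)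
    (n : ℕ) (hn : 1 ≤ n) (f : ℕ → A) (hadm : ∀ i < n, f (i+1) ≠ inv (f i))
    (hgood : f (n-1) = inv (f 0) →
      cnt1 n f (f 0) + cnt1 n f (inv (f 0)) + 2 ≤ n) :
    ∃ g : ℕ → A, (∀ i < n, g (i+1) ≠ inv (g i)) ∧ g n = g 0 ∧
      (∀ x, cnt1 n g x = cnt1 n f x) ∧
      (∀ x y, |((cnt2 n f x y : ℕ) : ℝ) - ((cnt2 n g x y : ℕ) : ℝ)| ≤ 4) := by
  classical
  set a := f 0 with ha
  set ia := inv a with hia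
  have hiaa : ia ≠ a := hfp a
  have haia : a ≠ ia := fun h => hiaa h.symm
  have hinvia : inv ia = a := hinv a
  -- a generic little helper
  have inv_cancel : ∀ x y : A, inv x = inv y → x = y := fun x y h => hinv.injective h
  by_cases hclosed : f n = f 0
  · exact ⟨f, hadm, hclosed, fun x => rfl, fun x y => by simp⟩
  by_cases hlast : f (n-1) = ia
  swap
  · -- Case 2 : just change the endpoint
    set g : ℕ → A := fun i => if i = n then a else f i with hg
    have gval : ∀ i, i ≠ n → g i = f i := by
      intro i h; simp [hg, h]
    have gn : g n = a := by simp [hg]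
    refine ⟨g, ?_, ?_, ?_, ?_⟩
    · intro i hi
      by_cases h1 : i = n - 1
      · have hi1 : i + 1 = n := by omega
        rw [hi1, gn, gval i (by omega)]
        intro h
        apply hlast
        have h2 := congrArg inv h
        rw [hinv] at h2
        rw [show n - 1 = i by omega, ← h2, hia]
      · rw [gval i (by omega), gval (i+1) (by omega)]
        exact hadm i hi
    · rw [gn, gval 0 (by omega)]
    · intro x
      rw [cnt1, cnt1]
      congr 1
      apply Finset.filter_congr
      intro i hi
      rw [mem_range] at hi
      rw [gval i (by omega)]
    · intro x y
      have key := abs_card_filter_sub_le n (fun i => f i = x ∧ f (i+1) = y)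
        (fun i => g i = x ∧ g (i+1) = y) {n-1} ?_
      · refine le_trans key ?_
        simp
      · intro i hi hE
        rw [Finset.mem_singleton] at hE
        show (f i = x ∧ f (i+1) = y) ↔ (g i = x ∧ g (i+1) = y)
        rw [gval i (by omega), gval (i+1) (by omega)]
  · -- Case 3 : the last step arrives along inv a
    have hcnt : cnt1 n f a + cnt1 n f ia + 2 ≤ n := hgood hlast
    set S : Finset ℕ := (range n).filter (fun i => f i ≠ a ∧ f i ≠ ia) with hS
    have hScard : cnt1 n f a + cnt1 n f ia + S.card = n := by
      have hsum : ∑ i ∈ range n, (((if f i = a then 1 else 0) + if f i = ia then 1 else 0)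
          + if f i ≠ a ∧ f i ≠ ia then (1:ℕ) else 0) = ∑ _i ∈ range n, 1 := by
        apply Finset.sum_congr rfl
        intro i _
        by_cases h1 : f i = a
        · have h2 : f i ≠ ia := by rw [h1]; exact haia
          simp [h1, h2, haia]
        · by_cases h2 : f i = ia <;> simp [h1, h2, haia, hiaa]
      rw [cnt1, cnt1, hS, Finset.card_filter, Finset.card_filter, Finset.card_filter,
        ← Finset.sum_add_distrib, ← Finset.sum_add_distrib, hsum]
      simp
    have hSne : S.Nonempty := Finset.card_pos.mp (by omega)
    set j := S.max' hSne with hj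
    have hjS : j ∈ S := Finset.max'_mem _ _
    have hmax : ∀ i ∈ S, i ≤ j := fun i hi => Finset.le_max' _ _ hi
    have hjmem := Finset.mem_filter.mp hjS
    have hjlt : j < n := mem_range.mp hjmem.1
    have hfj : f j ≠ a ∧ f j ≠ ia := hjmem.2
    have hj0 : j ≠ 0 := fun h => hfj.1 (by rw [h, ← ha])
    have hjn1 : j ≠ n - 1 := fun h => hfj.2 (by rw [h, hlast])
    have hj2 : j + 2 ≤ n := by omega
    set c := f j with hc
    have hca : c ≠ a := hfj.1
    have hcia : c ≠ ia := hfj.2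
    -- the tail run consists of ia
    have htail0 : ∀ d i, i = n - 1 - d → j < i → f i = ia := by
      intro d
      induction d with
      | zero =>
        intro i hi _
        rw [show i = n - 1 by omega]
        exact hlast
      | succ d ih =>
        intro i hi hji
        have hi1 : i + 1 = n - 1 - d := by omega
        have h1 : f (i+1) = ia := ih (i+1) hi1 (by omega)
        have hiS : i ∉ S := fun h => absurd (hmax i h) (by omega)
        have hia2 : f i = a ∨ f i = ia := by
          by_contra h
          push_neg at h
          exact hiS (Finset.mem_filter.mpr ⟨mem_range.mpr (by omega), h⟩)
        rcases hia2 with h | h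
        · exfalso
          apply hadm i (by omega)
          rw [h1, h, hia]
        · exact h
    have htail : ∀ i, j < i → i < n → f i = ia := by
      intro i h1 h2
      exact htail0 (n - 1 - i) i (by omega) h1
    by_cases hprev : f (j-1) = a
    · -- Case 3b : rearrange runs
      have hj1S : j - 1 ∉ S := by
        intro h
        exact (Finset.mem_filter.mp h).2.1 hprev
      have hS'ne : (S.erase j).Nonempty := by
        apply Finset.card_pos.mp
        rw [Finset.card_erase_of_mem hjS]
        omega
      set j' := (S.erase j).max' hS'ne with hj'
      have hj'S' : j' ∈ S.erase j := Finset.max'_mem _ _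
      have hj'S : j' ∈ S := Finset.mem_of_mem_erase hj'S'
      have hj'max : ∀ i ∈ S.erase j, i ≤ j' := fun i hi => Finset.le_max' _ _ hi
      have hj'mem := Finset.mem_filter.mp hj'S
      have hfj' : f j' ≠ a ∧ f j' ≠ ia := hj'mem.2
      have hj'0 : j' ≠ 0 := fun h => hfj'.1 (by rw [h, ← ha])
      have hj'nej : j' ≠ j := (Finset.mem_erase.mp hj'S').1
      have hj'lej : j' ≤ j := hmax j' hj'S
      have hj'nej1 : j' ≠ j - 1 := fun h => hj1S (h ▸ hj'S)
      have hj'2 : j' + 2 ≤ j := by omega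
      -- the middle run consists of a
      have hmid0 : ∀ d i, i = j - 1 - d → j' < i → f i = a := by
        intro d
        induction d with
        | zero =>
          intro i hi _
          rw [show i = j - 1 by omega]
          exact hprev
        | succ d ih =>
          intro i hi hji
          have hi1 : i + 1 = j - 1 - d := by omega
          have h1 : f (i+1) = a := ih (i+1) hi1 (by omega)
          have hilt : i < j - 1 := by omega
          have hiS : i ∉ S := by
            intro h
            have : i ∈ S.erase j := Finset.mem_erase.mpr ⟨by omega, h⟩
            exact absurd (hj'max i this) (by omega)
          have hia2 : f i = a ∨ f i = ia := by
            by_contra h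
            push_neg at h
            exact hiS (Finset.mem_filter.mpr ⟨mem_range.mpr (by omega), h⟩)
          rcases hia2 with h | h
          · exact h
          · exfalso
            apply hadm i (by omega)
            rw [h1, h, hia, hinvia]
      have hmid : ∀ i, j' < i → i < j → f i = a := by
        intro i h1 h2
        exact hmid0 (j - 1 - i) i (by omega) h1
      set c' := f j' with hc'
      set p := j' + (n - 1 - j) with hp
      set q := p + 1 with hq
      have hj'p : j' < p := by omega
      have hqn : q + 1 ≤ n - 1 := by omega
      set g : ℕ → A := fun i => if i ≤ j' then f i else if i ≤ p then ia else
        if i = q then c else a with hg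
      have g0 : ∀ i, i ≤ j' → g i = f i := by intro i h; simp [hg, h]
      have g1 : ∀ i, j' < i → i ≤ p → g i = ia := by
        intro i h1 h2; simp [hg, h2, show ¬ i ≤ j' by omega]
      have g2 : g q = c := by simp [hg, show ¬ q ≤ j' by omega, show ¬ q ≤ p by omega]
      have g3 : ∀ i, q < i → g i = a := by
        intro i h
        simp [hg, show ¬ i ≤ j' by omega, show ¬ i ≤ p by omega, show i ≠ q by omega]
      refine ⟨g, ?_, ?_, ?_, ?_⟩
      · -- admissibility
        intro i hi
        rcases lt_trichotomy i j' with h | h | h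
        · rw [g0 i (by omega), g0 (i+1) (by omega)]
          exact hadm i (by omega)
        · rw [h, g0 j' (le_refl j'), g1 (j'+1) (by omega) (by omega)]
          intro hcon
          apply hfj'.1
          have h2 := congrArg inv hcon
          rw [hia, hinv, hinv] at h2
          exact h2.symm
        · rcases lt_trichotomy i p with h2 | h2 | h2
          · rw [g1 i h (by omega), g1 (i+1) (by omega) (by omega)]
            rw [hinvia]
            exact hiaa
          · rw [h2, g1 p hj'p (le_refl p), show p + 1 = q from rfl, g2, hinvia]
            exact hca
          · rcases lt_trichotomy i q with h3 | h3 | h3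
            · omega
            · rw [h3, g2, g3 (q+1) (by omega)]
              intro hcon
              apply hcia
              have h4 := congrArg inv hcon
              rw [hinv] at h4
              rw [← h4, hia]
            · rw [g3 i h3, g3 (i+1) (by omega)]
              intro hcon
              exact hfp a hcon.symm
      · -- closed
        rw [g3 n (by omega), g0 0 (by omega), ← ha]
      · -- first marginal
        intro x
        have cast1 : ∀ (h : ℕ → A), ((cnt1 n h x : ℕ) : ℝ)
            = ∑ i ∈ Ico 0 n, (if h i = x then (1:ℝ) else 0) := by
          intro h
          rw [cnt1, ← Finset.range_eq_Ico, Finset.card_filter]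
          push_cast
          rfl
        have key : ((cnt1 n g x : ℕ) : ℝ) = ((cnt1 n f x : ℕ) : ℝ) := by
          rw [cast1, cast1]
          rw [split4 (fun i => if g i = x then (1:ℝ) else 0) n (j'+1) (p+1) (p+2)
            (by omega) (by omega) (by omega)]
          rw [split4 (fun i => if f i = x then (1:ℝ) else 0) n (j'+1) j (j+1)
            (by omega) (by omega) (by omega)]
          have e0 : ∑ i ∈ Ico 0 (j'+1), (if g i = x then (1:ℝ) else 0)
              = ∑ i ∈ Ico 0 (j'+1), (if f i = x then (1:ℝ) else 0) := by
            apply Finset.sum_congr rfl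
            intro i hi
            rw [mem_Ico] at hi
            rw [g0 i (by omega)]
          have e1 : ∑ i ∈ Ico (j'+1) (p+1), (if g i = x then (1:ℝ) else 0)
              = if ia = x then ((p + 1 - (j'+1) : ℕ) : ℝ) else 0 := by
            apply sum_ite_const_real
            intro i h1 h2
            rw [g1 i (by omega) (by omega)]
          have e2 : ∑ i ∈ Ico (p+1) (p+2), (if g i = x then (1:ℝ) else 0)
              = if c = x then (1:ℝ) else 0 := by
            rw [sum_Ico_single _ _ _ rfl, show p + 1 = q from rfl, g2]
          have e3 : ∑ i ∈ Ico (p+2) n, (if g i = x then (1:ℝ) else 0)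
              = if a = x then ((n - (p+2) : ℕ) : ℝ) else 0 := by
            apply sum_ite_const_real
            intro i h1 h2
            rw [g3 i (by omega)]
          have e4 : ∑ i ∈ Ico (j'+1) j, (if f i = x then (1:ℝ) else 0)
              = if a = x then ((j - (j'+1) : ℕ) : ℝ) else 0 := by
            apply sum_ite_const_real
            intro i h1 h2
            rw [hmid i (by omega) (by omega)]
          have e5 : ∑ i ∈ Ico j (j+1), (if f i = x then (1:ℝ) else 0)
              = if c = x then (1:ℝ) else 0 := by
            rw [sum_Ico_single _ _ _ rfl, ← hc]
          have e6 : ∑ i ∈ Ico (j+1) n, (if f i = x then (1:ℝ) else 0)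
              = if ia = x then ((n - (j+1) : ℕ) : ℝ) else 0 := by
            apply sum_ite_const_real
            intro i h1 h2
            rw [htail i (by omega) (by omega)]
          rw [e0, e1, e2, e3, e4, e5, e6]
          rw [show (p + 1 - (j'+1) : ℕ) = (n - (j+1) : ℕ) by omega,
              show (n - (p+2) : ℕ) = (j - (j'+1) : ℕ) by omega]
          ring
        exact_mod_cast key
      · -- pair counts close
        intro x y
        have cast2 : ∀ (h : ℕ → A), ((cnt2 n h x y : ℕ) : ℝ)
            = ∑ i ∈ Ico 0 n, (if h i = x ∧ h (i+1) = y then (1:ℝ) else 0) := by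
          intro h
          rw [cnt2, ← Finset.range_eq_Ico, Finset.card_filter]
          push_cast
          rfl
        rw [cast2, cast2]
        rw [split7 _ n j' (j'+1) (j-1) j (j+1) (n-1) (by omega) (by omega) (by omega)
          (by omega) (by omega) (by omega)]
        rw [split7 _ n j' (j'+1) p q (q+1) (n-1) (by omega) (by omega) (by omega)
          (by omega) (by omega) (by omega)]
        have e0 : ∑ i ∈ Ico 0 j', (if g i = x ∧ g (i+1) = y then (1:ℝ) else 0)
            = ∑ i ∈ Ico 0 j', (if f i = x ∧ f (i+1) = y then (1:ℝ) else 0) := by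
          apply Finset.sum_congr rfl
          intro i hi
          rw [mem_Ico] at hi
          rw [g0 i (by omega), g0 (i+1) (by omega)]
        have eblock1 : ∑ i ∈ Ico (j'+1) (j-1), (if f i = x ∧ f (i+1) = y then (1:ℝ) else 0)
            = if (a = x ∧ a = y) then ((j - 1 - (j'+1) : ℕ) : ℝ) else 0 := by
          apply sum_ite_const_real
          intro i h1 h2
          rw [hmid i (by omega) (by omega), hmid (i+1) (by omega) (by omega)]
        have eblock2 : ∑ i ∈ Ico (j+1) (n-1), (if f i = x ∧ f (i+1) = y then (1:ℝ) else 0)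
            = if (ia = x ∧ ia = y) then ((n - 1 - (j+1) : ℕ) : ℝ) else 0 := by
          apply sum_ite_const_real
          intro i h1 h2
          rw [htail i (by omega) (by omega), htail (i+1) (by omega) (by omega)]
        have eblock1' : ∑ i ∈ Ico (q+1) (n-1), (if g i = x ∧ g (i+1) = y then (1:ℝ) else 0)
            = if (a = x ∧ a = y) then ((n - 1 - (q+1) : ℕ) : ℝ) else 0 := by
          apply sum_ite_const_real
          intro i h1 h2
          rw [g3 i (by omega), g3 (i+1) (by omega)]
        have eblock2' : ∑ i ∈ Ico (j'+1) p, (if g i = x ∧ g (i+1) = y then (1:ℝ) else 0)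
            = if (ia = x ∧ ia = y) then ((p - (j'+1) : ℕ) : ℝ) else 0 := by
          apply sum_ite_const_real
          intro i h1 h2
          rw [g1 i (by omega) (by omega), g1 (i+1) (by omega) (by omega)]
        rw [eblock1, eblock2, eblock1', eblock2', e0]
        rw [sum_Ico_single _ _ _ rfl, sum_Ico_single _ _ _ (by omega : j = (j-1) + 1),
          sum_Ico_single _ _ _ rfl, sum_Ico_single _ _ _ (by omega : n = (n-1) + 1),
          sum_Ico_single _ _ _ rfl, sum_Ico_single _ _ _ rfl,
          sum_Ico_single _ _ _ rfl, sum_Ico_single _ _ _ (by omega : n = (n-1) + 1)]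
        rw [show (n - 1 - (q+1) : ℕ) = (j - 1 - (j'+1) : ℕ) by omega,
            show (p - (j'+1) : ℕ) = (n - 1 - (j+1) : ℕ) by omega]
        have harr : ∀ (s0 b1 b2 u1 u2 u3 u4 v1 v2 v3 v4 : ℝ),
            (s0 + u1 + b1 + u2 + u3 + b2 + u4) - (s0 + v1 + b2 + v2 + v3 + b1 + v4)
            = (u1 + u2 + u3 + u4) - (v1 + v2 + v3 + v4) := by intros; ring
        rw [harr]
        exact abs_diff4 (ite01 _) (ite01 _) (ite01 _) (ite01 _) (ite01 _) (ite01 _)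
          (ite01 _) (ite01 _)
    · -- Case 3a : swap positions j and n-1, close at a
      set g : ℕ → A := fun i => if i = j then ia else if i = n-1 then c else
        if i = n then a else f i with hg
      have gj : g j = ia := by simp [hg]
      have gn1 : g (n-1) = c := by simp [hg, show n - 1 ≠ j by omega, show n - 1 ≠ n by omega]
      have gn : g n = a := by simp [hg, show n ≠ j by omega, show n ≠ n - 1 by omega]
      have gval : ∀ i, i ≠ j → i ≠ n - 1 → i ≠ n → g i = f i := by
        intro i h1 h2 h3; simp [hg, h1, h2, h3]
      refine ⟨g, ?_, ?_, ?_, ?_⟩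
      · -- admissibility
        intro i hi
        by_cases h1 : i = j - 1
        · rw [show i + 1 = j by omega, gj, gval i (by omega) (by omega) (by omega)]
          intro hcon
          apply hprev
          have h2 := congrArg inv hcon
          rw [hia, hinv, hinv] at h2
          rw [show j - 1 = i by omega, ← h2]
        · by_cases h2 : i = j
          · rw [h2, gj]
            by_cases h3 : j + 1 = n - 1
            · rw [h3, gn1, hinvia]
              exact hca
            · rw [gval (j+1) (by omega) (by omega) (by omega),
                htail (j+1) (by omega) (by omega), hinvia]
              exact hiaa
          · by_cases h3 : i = n - 2
            · by_cases h4 : n - 2 = j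
              · omega
              · rw [show i + 1 = n - 1 by omega, gn1,
                  gval i (by omega) (by omega) (by omega), h3,
                  htail (n-2) (by omega) (by omega), hinvia]
                exact hca
            · by_cases h4 : i = n - 1
              · rw [show i + 1 = n by omega, gn, h4, gn1]
                intro hcon
                apply hcia
                have h5 := congrArg inv hcon
                rw [hinv] at h5
                rw [← h5, hia]
              · rw [gval i (by omega) (by omega) (by omega),
                  gval (i+1) (by omega) (by omega) (by omega)]
                exact hadm i hi
      · -- closed
        rw [gn, gval 0 (by omega) (by omega) (by omega), ← ha]
      · -- first marginal
        intro x
        have cast1 : ∀ (h : ℕ → A), ((cnt1 n h x : ℕ) : ℝ)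
            = ∑ i ∈ Ico 0 n, (if h i = x then (1:ℝ) else 0) := by
          intro h
          rw [cnt1, ← Finset.range_eq_Ico, Finset.card_filter]
          push_cast
          rfl
        have key : ((cnt1 n g x : ℕ) : ℝ) = ((cnt1 n f x : ℕ) : ℝ) := by
          rw [cast1, cast1]
          rw [split4 _ n j (j+1) (n-1) (by omega) (by omega) (by omega)]
          rw [split4 (fun i => if f i = x then (1:ℝ) else 0) n j (j+1) (n-1)
            (by omega) (by omega) (by omega)]
          have e0 : ∑ i ∈ Ico 0 j, (if g i = x then (1:ℝ) else 0)
              = ∑ i ∈ Ico 0 j, (if f i = x then (1:ℝ) else 0) := by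
            apply Finset.sum_congr rfl
            intro i hi
            rw [mem_Ico] at hi
            rw [gval i (by omega) (by omega) (by omega)]
          have e1 : ∑ i ∈ Ico (j+1) (n-1), (if g i = x then (1:ℝ) else 0)
              = ∑ i ∈ Ico (j+1) (n-1), (if f i = x then (1:ℝ) else 0) := by
            apply Finset.sum_congr rfl
            intro i hi
            rw [mem_Ico] at hi
            rw [gval i (by omega) (by omega) (by omega)]
          rw [e0, e1, sum_Ico_single _ _ _ rfl, sum_Ico_single _ _ _ rfl,
            sum_Ico_single _ _ _ (by omega : n = (n-1) + 1),
            sum_Ico_single (fun i => if f i = x then (1:ℝ) else 0) _ _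
              (by omega : n = (n-1) + 1)]
          rw [gj, gn1, ← hc, hlast]
          ring
        exact_mod_cast key
      · -- pair counts close
        intro x y
        have key := abs_card_filter_sub_le n (fun i => f i = x ∧ f (i+1) = y)
          (fun i => g i = x ∧ g (i+1) = y) {j-1, j, n-2, n-1} ?_
        · refine le_trans key ?_
          have h4 : ({j-1, j, n-2, n-1} : Finset ℕ).card ≤ 4 := by
            have h1 := Finset.card_insert_le (j-1) ({j, n-2, n-1} : Finset ℕ)
            have h2 := Finset.card_insert_le j ({n-2, n-1} : Finset ℕ)
            have h3 := Finset.card_insert_le (n-2) ({n-1} : Finset ℕ)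
            simp only [Finset.card_singleton] at h1 h2 h3
            omega
          exact_mod_cast h4
        · intro i hi hE
          simp only [Finset.mem_insert, Finset.mem_singleton, not_or] at hE
          obtain ⟨hE1, hE2, hE3, hE4⟩ := hE
          show (f i = x ∧ f (i+1) = y) ↔ (g i = x ∧ g (i+1) = y)
          rw [gval i (by omega) (by omega) (by omega),
            gval (i+1) (by omega) (by omega) (by omega)]

end

section
open Finset
variable {A : Type*} [Fintype A] [DecidableEq A]

lemma cnt2_fin (n : ℕ) (f : ℕ → A) (w : Fin (n+1) → A)
    (hfw : ∀ i : Fin (n+1), f i.val = w i) (a b : A) :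
    cnt2 n f a b
      = (Finset.univ.filter fun i : Fin n => w i.castSucc = a ∧ w i.succ = b).card := by
  rw [cnt2, Finset.card_filter, Finset.card_filter,
     ← Fin.sum_univ_eq_sum_range (fun i => if f i = a ∧ f (i+1) = b then (1:ℕ) else 0) n]
  apply Finset.sum_congr rfl
  intro i _
  have h1 := hfw i.castSucc
  rw [Fin.coe_castSucc] at h1
  have h2 := hfw i.succ
  rw [Fin.val_succ] at h2
  rw [h1, h2]

end

/-- Approximation of pair empirical measures by balanced ones: there is a constant `K`
depending only on `d` such that every pair empirical measure `π` of an admissible walk of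
length `n+1` whose first marginal `ν` is good (for every `a`, either `ν(a⁻¹) = 0` or
`n(ν(a)+ν(a⁻¹)) ≤ n-2`) lies within `L^∞`-distance `K/n` of some balanced pair empirical
measure `π'` with the same first marginal. -/
theorem stmt17 {A : Type*} [Fintype A] [DecidableEq A] (d : ℕ) (hd : 2 ≤ d)
    (hcard : Fintype.card A = 2 * d) (inv : A → A)
    (hinv : Function.Involutive inv) (hfp : ∀ a, inv a ≠ a) :
    ∃ K : ℝ, 0 < K ∧ ∀ n : ℕ, 1 ≤ n → ∀ π : A → A → ℝ,
      IsPairEmp inv n π →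
      (∀ a : A, (∑ b, π (inv a) b) = 0 ∨
        (n : ℝ) * ((∑ b, π a b) + ∑ b, π (inv a) b) ≤ (n : ℝ) - 2) →
      ∃ π' : A → A → ℝ, IsBalanced inv π' ∧ IsPairEmp inv n π' ∧
        (∀ a, ∑ b, π' a b = ∑ b, π a b) ∧
        ∀ a b, |π a b - π' a b| ≤ K / n := by
  refine ⟨4, by norm_num, ?_⟩
  intro n hn π hPE hgood
  have hn0 : (0:ℝ) < n := by exact_mod_cast hn
  obtain ⟨w, hwadm, hwπ⟩ := hPE
  set f : ℕ → A := fun i => w ⟨min i n, by omega⟩ with hf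
  have hfw : ∀ i : Fin (n+1), f i.val = w i := by
    intro i
    simp only [hf]
    congr 1
    exact Fin.ext (by simp [Nat.min_eq_left (Nat.lt_succ_iff.mp i.isLt)])
  have hadm : ∀ i < n, f (i+1) ≠ inv (f i) := by
    intro i hi
    have h1 := hfw (⟨i, hi⟩ : Fin n).castSucc
    rw [Fin.coe_castSucc] at h1
    have h2 := hfw (⟨i, hi⟩ : Fin n).succ
    rw [Fin.val_succ] at h2
    rw [h1, h2]
    exact hwadm ⟨i, hi⟩
  have hπf : ∀ x y, π x y = (cnt2 n f x y : ℝ)/n := by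
    intro x y
    rw [hwπ x y, cnt2_fin n f w hfw x y]
  have cast_sum : ∀ g : A → ℕ, ((∑ b, g b : ℕ) : ℝ) = ∑ b, ((g b : ℕ) : ℝ) := by
    intro g; push_cast; rfl
  have hmarg : ∀ x, ∑ b, π x b = (cnt1 n f x : ℝ)/n := by
    intro x
    rw [show ∑ b, π x b = ∑ b, ((cnt2 n f x b : ℕ):ℝ)/n from
      Finset.sum_congr rfl (fun b _ => hπf x b), ← Finset.sum_div, ← cast_sum,
      sum_cnt2_right]
  have hgood' : f (n-1) = inv (f 0) → cnt1 n f (f 0) + cnt1 n f (inv (f 0)) + 2 ≤ n := by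
    intro hl
    rcases hgood (f 0) with h | h
    · exfalso
      rw [hmarg] at h
      have h2 : (cnt1 n f (inv (f 0)) : ℝ) = 0 := by
        rcases div_eq_zero_iff.mp h with h2 | h2
        · exact h2
        · exact absurd h2 (by positivity)
      have h3 : cnt1 n f (inv (f 0)) = 0 := by exact_mod_cast h2
      have hmem : n - 1 ∈ (range n).filter (fun i => f i = inv (f 0)) :=
        Finset.mem_filter.mpr ⟨mem_range.mpr (by omega), hl⟩
      have h4 := Finset.card_pos.mpr ⟨n-1, hmem⟩
      rw [show ((range n).filter (fun i => f i = inv (f 0))).card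
        = cnt1 n f (inv (f 0)) from rfl] at h4
      omega
    · rw [hmarg, hmarg] at h
      have heq : (n:ℝ) * ((cnt1 n f (f 0) : ℝ)/n + (cnt1 n f (inv (f 0)) : ℝ)/n)
          = (cnt1 n f (f 0) : ℝ) + (cnt1 n f (inv (f 0)) : ℝ) := by
        field_simp
      rw [heq] at h
      have h5 : ((cnt1 n f (f 0) + cnt1 n f (inv (f 0)) + 2 : ℕ) : ℝ) ≤ (n : ℕ) := by
        push_cast
        linarith
      exact_mod_cast h5
  obtain ⟨g, hgadm, hgclosed, hgcnt1, hgcnt2⟩ := close_walk inv hinv hfp n hn f hadm hgood'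
  refine ⟨fun x y => (cnt2 n g x y : ℝ)/n, ?_, ?_, ?_, ?_⟩
  · exact isBalanced_of_closed inv n hn g hgadm hgclosed
  · exact isPairEmp_of inv n g hgadm
  · intro x
    rw [hmarg x, ← Finset.sum_div, ← cast_sum, sum_cnt2_right, hgcnt1]
  · intro x y
    rw [hπf x y]
    have h1 : (cnt2 n f x y : ℝ)/n - (cnt2 n g x y : ℝ)/n
        = ((cnt2 n f x y : ℝ) - (cnt2 n g x y : ℝ))/n := by ring
    show |(cnt2 n f x y : ℝ)/n - (cnt2 n g x y : ℝ)/n| ≤ 4/n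
    rw [h1, abs_div, abs_of_pos hn0]
    have h2 := hgcnt2 x y
    gcongr
end
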